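/- arXiv:1403.3128 — 8 statements merged into one kernel-verified Lean document; each statement's English description precedes it below -/
import Mathlib

section
/- Let n ≥ 1 and p > n/(n+2), p ≠ 1. Then every probability density f on ℝⁿ with bounded second moment E(f) satisfies, for every σ > 0, the inequality R_p(f) − (n/2) log E(f) ≤ R_p(B_σ) − (n/2) log E(B_σ), where B_σ is the Barenblatt profile of parameter σ. -/
open MeasureTheory Real Filter Module
open scoped Topology

noncomputable section

/-- The Rényi entropy of order `p` of a density `f` on `ℝⁿ`:
`R_p(f) = (1/(1-p)) log ∫ f^p`. -/
def Rp (n : ℕ) (p : ℝ) (f : EuclideanSpace ℝ (Fin n) → ℝ) : ℝ :=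
  (1 / (1 - p)) * Real.log (∫ x, f x ^ p)

/-- The second moment (energy) of a density `f` on `ℝⁿ`: `E(f) = ∫ |x|² f`. -/
def energy (n : ℕ) (f : EuclideanSpace ℝ (Fin n) → ℝ) : ℝ :=
  ∫ x, ‖x‖ ^ 2 * f x

/-- The Barenblatt profile on `ℝⁿ` with parameters `σ` and `C`:
`(C + ((1-p)/p)|y|²/(2σ))^{1/(p-1)}` for `p < 1`, and
`(C - ((p-1)/p)|y|²/(2σ))₊^{1/(p-1)}` for `p > 1`. -/
def barenblatt (n : ℕ) (p σ C : ℝ) (y : EuclideanSpace ℝ (Fin n)) : ℝ :=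
  if p < 1 then (C + ((1 - p) / p) * ‖y‖ ^ 2 / (2 * σ)) ^ (1 / (p - 1))
  else (max (C - ((p - 1) / p) * ‖y‖ ^ 2 / (2 * σ)) 0) ^ (1 / (p - 1))

lemma aux_integrable_pow (n : ℕ) {C c α : ℝ} (hC : 0 < C) (hc : 0 < c) (hα : (n : ℝ) / 2 < α) :
    Integrable (fun x : EuclideanSpace ℝ (Fin n) => (C + c * ‖x‖ ^ 2) ^ (-α)) := by
  have hr : (finrank ℝ (EuclideanSpace ℝ (Fin n)) : ℝ) < 2 * α := by
    rw [finrank_euclideanSpace_fin]; linarith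
  have hm : 0 < min C c := lt_min hC hc
  refine ((integrable_rpow_neg_one_add_norm_sq hr).const_mul ((min C c) ^ (-α))).mono'
    ?_ (Filter.Eventually.of_forall fun x => ?_)
  · apply Measurable.aestronglyMeasurable
    fun_prop
  · have h1 : (0:ℝ) < 1 + ‖x‖ ^ 2 := by positivity
    have hb : min C c * (1 + ‖x‖ ^ 2) ≤ C + c * ‖x‖ ^ 2 := by
      have h2 : min C c ≤ C := min_le_left _ _
      have h3 : min C c ≤ c := min_le_right _ _
      nlinarith [sq_nonneg ‖x‖]
    have key : (C + c * ‖x‖ ^ 2) ^ (-α) ≤ (min C c * (1 + ‖x‖ ^ 2)) ^ (-α) :=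
      Real.rpow_le_rpow_of_nonpos (by positivity) hb (by linarith)
    have habs : |(C + c * ‖x‖ ^ 2) ^ (-α)| = (C + c * ‖x‖ ^ 2) ^ (-α) :=
      abs_of_nonneg (Real.rpow_nonneg (by positivity) _)
    rw [Real.norm_eq_abs, habs]
    calc (C + c * ‖x‖ ^ 2) ^ (-α) ≤ (min C c * (1 + ‖x‖ ^ 2)) ^ (-α) := key
      _ = min C c ^ (-α) * (1 + ‖x‖ ^ 2) ^ (-(2*α)/2) := by
          rw [Real.mul_rpow hm.le (by positivity)]
          ring_nf


lemma tangent_le {a b p : ℝ} (ha : 0 ≤ a) (hb : 0 < b) (hp0 : 0 < p) (hp1 : p < 1) :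
    a ^ p ≤ (1 - p) * b ^ p + p * b ^ (p - 1) * a := by
  have hd : 0 ≤ a / b := div_nonneg ha hb.le
  have hs : -1 ≤ a / b - 1 := by linarith
  have h := rpow_one_add_le_one_add_mul_self hs hp0.le hp1.le
  rw [show (1 : ℝ) + (a / b - 1) = a / b by ring] at h
  have hbp : 0 < b ^ p := Real.rpow_pos_of_pos hb _
  have h2 : (a / b) ^ p * b ^ p ≤ (1 + p * (a / b - 1)) * b ^ p :=
    mul_le_mul_of_nonneg_right h hbp.le
  rw [Real.div_rpow ha hb.le, div_mul_cancel₀ _ (ne_of_gt hbp)] at h2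
  have hb1 : b ^ (p - 1) = b ^ p / b := by rw [Real.rpow_sub hb, Real.rpow_one]
  calc a ^ p ≤ (1 + p * (a / b - 1)) * b ^ p := h2
    _ = (1 - p) * b ^ p + p * b ^ (p - 1) * a := by rw [hb1]; field_simp; ring

lemma tangent_ge {a b p : ℝ} (ha : 0 ≤ a) (hb : 0 ≤ b) (hp : 1 < p) :
    (1 - p) * b ^ p + p * b ^ (p - 1) * a ≤ a ^ p := by
  rcases eq_or_lt_of_le hb with rfl | hb
  · rw [Real.zero_rpow (by positivity : p ≠ 0),
      Real.zero_rpow (by intro h; apply hp.ne'; linarith [sub_eq_zero.mp h] : p - 1 ≠ 0)]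
    simpa using Real.rpow_nonneg ha p
  · have hd : 0 ≤ a / b := div_nonneg ha hb.le
    have hs : -1 ≤ a / b - 1 := by linarith
    have h := one_add_mul_self_le_rpow_one_add hs hp.le
    rw [show (1 : ℝ) + (a / b - 1) = a / b by ring] at h
    have hbp : 0 < b ^ p := Real.rpow_pos_of_pos hb _
    have h2 : (1 + p * (a / b - 1)) * b ^ p ≤ (a / b) ^ p * b ^ p :=
      mul_le_mul_of_nonneg_right h hbp.le
    rw [Real.div_rpow ha hb.le, div_mul_cancel₀ _ (ne_of_gt hbp)] at h2
    have hb1 : b ^ (p - 1) = b ^ p / b := by rw [Real.rpow_sub hb, Real.rpow_one]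
    calc (1 - p) * b ^ p + p * b ^ (p - 1) * a
        = (1 + p * (a / b - 1)) * b ^ p := by rw [hb1]; field_simp; ring
      _ ≤ a ^ p := h2

section PLt
variable {n : ℕ} {p σ C : ℝ}

lemma p_pos (hn : 1 ≤ n) (hp : (n : ℝ) / (n + 2) < p) : 0 < p := by
  have h1 : (1 : ℝ) ≤ (n : ℝ) := by exact_mod_cast hn
  have h2 : (0 : ℝ) < (n : ℝ) / (n + 2) := by positivity
  linarith

lemma B_eq_lt (hplt : p < 1) (x : EuclideanSpace ℝ (Fin n)) :
    barenblatt n p σ C x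
      = (C + ((1 - p) / p / (2 * σ)) * ‖x‖ ^ 2) ^ (-(1 / (1 - p))) := by
  rw [barenblatt, if_pos hplt]
  have h1 : C + (1 - p) / p * ‖x‖ ^ 2 / (2 * σ) = C + (1 - p) / p / (2 * σ) * ‖x‖ ^ 2 := by ring
  have h2 : 1 / (p - 1) = -(1 / (1 - p)) := by
    rw [show (1:ℝ) - p = -(p - 1) by ring, div_neg, neg_neg]
  rw [h1]; congr 1

lemma c_pos_lt (hn : 1 ≤ n) (hp : (n : ℝ) / (n + 2) < p) (hplt : p < 1) (hσ : 0 < σ) :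
    0 < (1 - p) / p / (2 * σ) := by
  have h0 := p_pos hn hp
  have h1 : 0 < 1 - p := by linarith
  positivity

lemma base_pos_lt (hn : 1 ≤ n) (hp : (n : ℝ) / (n + 2) < p) (hplt : p < 1) (hσ : 0 < σ)
    (hC : 0 < C) (x : EuclideanSpace ℝ (Fin n)) :
    0 < C + ((1 - p) / p / (2 * σ)) * ‖x‖ ^ 2 := by
  have h := c_pos_lt hn hp hplt hσ
  nlinarith [sq_nonneg ‖x‖, mul_nonneg h.le (sq_nonneg ‖x‖)]

lemma B_pos_lt (hn : 1 ≤ n) (hp : (n : ℝ) / (n + 2) < p) (hplt : p < 1) (hσ : 0 < σ)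
    (hC : 0 < C) (x : EuclideanSpace ℝ (Fin n)) : 0 < barenblatt n p σ C x := by
  rw [B_eq_lt hplt]
  exact Real.rpow_pos_of_pos (base_pos_lt hn hp hplt hσ hC x) _

lemma alpha2_gt (hn : 1 ≤ n) (hp : (n : ℝ) / (n + 2) < p) (hplt : p < 1) :
    (n : ℝ) / 2 < p / (1 - p) := by
  have h1 : (0 : ℝ) < (n : ℝ) + 2 := by positivity
  have h2 : (n : ℝ) < p * ((n : ℝ) + 2) := by
    have := (div_lt_iff₀ h1).mp hp
    linarith
  rw [div_lt_div_iff₀ (by norm_num) (by linarith : (0:ℝ) < 1 - p)]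
  nlinarith

lemma alpha1_gt (hn : 1 ≤ n) (hp : (n : ℝ) / (n + 2) < p) (hplt : p < 1) :
    (n : ℝ) / 2 < 1 / (1 - p) := by
  have h := alpha2_gt hn hp hplt
  have hp0 := p_pos hn hp
  have h1 : (0:ℝ) < (n:ℝ) + 2 := by positivity
  have h2 : (n : ℝ) < p * ((n : ℝ) + 2) := by
    have := (div_lt_iff₀ h1).mp hp
    linarith
  have h3 : (0:ℝ) < 1 - p := by linarith
  rw [div_lt_div_iff₀ (by norm_num : (0:ℝ) < 2) h3]
  nlinarith


lemma B_int_lt (hn : 1 ≤ n) (hp : (n : ℝ) / (n + 2) < p) (hplt : p < 1) (hσ : 0 < σ)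
    (hC : 0 < C) : Integrable (barenblatt n p σ C) := by
  have : barenblatt n p σ C
      = fun x => (C + ((1 - p) / p / (2 * σ)) * ‖x‖ ^ 2) ^ (-(1 / (1 - p))) :=
    funext (B_eq_lt hplt)
  rw [this]
  exact aux_integrable_pow n hC (c_pos_lt hn hp hplt hσ) (alpha1_gt hn hp hplt)

lemma B_pow_eq2_lt (hn : 1 ≤ n) (hp : (n : ℝ) / (n + 2) < p) (hplt : p < 1) (hσ : 0 < σ)
    (hC : 0 < C) (x : EuclideanSpace ℝ (Fin n)) :
    barenblatt n p σ C x ^ p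
      = (C + ((1 - p) / p / (2 * σ)) * ‖x‖ ^ 2) ^ (-(p / (1 - p))) := by
  have hb := base_pos_lt hn hp hplt hσ hC x
  rw [B_eq_lt hplt, ← Real.rpow_mul hb.le]
  congr 1
  have h3 : (1:ℝ) - p ≠ 0 := by intro h; linarith
  field_simp

lemma B_pow_int_lt (hn : 1 ≤ n) (hp : (n : ℝ) / (n + 2) < p) (hplt : p < 1) (hσ : 0 < σ)
    (hC : 0 < C) : Integrable (fun x => barenblatt n p σ C x ^ p) := by
  have : (fun x : EuclideanSpace ℝ (Fin n) => barenblatt n p σ C x ^ p)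
      = fun x => (C + ((1 - p) / p / (2 * σ)) * ‖x‖ ^ 2) ^ (-(p / (1 - p))) :=
    funext (B_pow_eq2_lt hn hp hplt hσ hC)
  rw [this]
  exact aux_integrable_pow n hC (c_pos_lt hn hp hplt hσ) (alpha2_gt hn hp hplt)

lemma B_cont_lt (hn : 1 ≤ n) (hp : (n : ℝ) / (n + 2) < p) (hplt : p < 1) (hσ : 0 < σ)
    (hC : 0 < C) : Continuous (barenblatt n p σ C) := by
  have : barenblatt n p σ C
      = fun x => (C + ((1 - p) / p / (2 * σ)) * ‖x‖ ^ 2) ^ (-(1 / (1 - p))) :=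
    funext (B_eq_lt hplt)
  rw [this]
  refine Continuous.rpow_const (by fun_prop) (fun x => Or.inl ?_)
  exact ne_of_gt (base_pos_lt hn hp hplt hσ hC x)

lemma B_mom_int_lt (hn : 1 ≤ n) (hp : (n : ℝ) / (n + 2) < p) (hplt : p < 1) (hσ : 0 < σ)
    (hC : 0 < C) : Integrable (fun x => ‖x‖ ^ 2 * barenblatt n p σ C x) := by
  set c := (1 - p) / p / (2 * σ) with hc
  have hcp : 0 < c := c_pos_lt hn hp hplt hσ
  refine ((aux_integrable_pow n hC hcp (alpha2_gt hn hp hplt)).const_mul c⁻¹).mono'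
    ((continuous_norm.pow 2).mul (B_cont_lt hn hp hplt hσ hC)).aestronglyMeasurable
    (Filter.Eventually.of_forall fun x => ?_)
  have hb : 0 < C + c * ‖x‖ ^ 2 := base_pos_lt hn hp hplt hσ hC x
  have hB := B_pos_lt (σ := σ) (C := C) hn hp hplt hσ hC x
  have hnn : 0 ≤ ‖x‖ ^ 2 * barenblatt n p σ C x := by positivity
  rw [Real.norm_eq_abs, abs_of_nonneg hnn]
  have hx2 : ‖x‖ ^ 2 ≤ c⁻¹ * (C + c * ‖x‖ ^ 2) := by
    rw [inv_mul_eq_div, le_div_iff₀ hcp]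
    nlinarith
  have h2 : ‖x‖ ^ 2 * barenblatt n p σ C x
      ≤ (c⁻¹ * (C + c * ‖x‖ ^ 2)) * barenblatt n p σ C x :=
    mul_le_mul_of_nonneg_right hx2 hB.le
  refine h2.trans (le_of_eq ?_)
  rw [B_eq_lt hplt, mul_assoc]
  congr 1
  rw [← Real.rpow_one_add' hb.le (by
    have h3 : (0:ℝ) < 1 - p := by linarith
    have h4 := alpha1_gt hn hp hplt
    intro h
    have h6 : 1 / (1 - p) = 1 := by linarith
    rw [div_eq_one_iff_eq (by linarith : (1:ℝ) - p ≠ 0)] at h6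
    linarith [p_pos hn hp])]
  congr 1
  have h3 : (1:ℝ) - p ≠ 0 := by intro h; linarith
  field_simp
  ring

lemma B_pow_sub_one_lt (hn : 1 ≤ n) (hp : (n : ℝ) / (n + 2) < p) (hplt : p < 1) (hσ : 0 < σ)
    (hC : 0 < C) (x : EuclideanSpace ℝ (Fin n)) :
    barenblatt n p σ C x ^ (p - 1) = C + ((1 - p) / p / (2 * σ)) * ‖x‖ ^ 2 := by
  have hb := base_pos_lt hn hp hplt hσ hC x
  rw [B_eq_lt hplt, ← Real.rpow_mul hb.le]
  have h3 : (1:ℝ) - p ≠ 0 := by intro h; linarith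
  rw [show -(1 / (1 - p)) * (p - 1) = 1 by field_simp; ring, Real.rpow_one]
lemma key_int_lt (hn : 1 ≤ n) (hp : (n : ℝ) / (n + 2) < p) (hplt : p < 1) (hσ : 0 < σ)
    (hC : 0 < C) (hBmass : (∫ x, barenblatt n p σ C x) = 1)
    (g : EuclideanSpace ℝ (Fin n) → ℝ) (hg0 : ∀ x, 0 ≤ g x) (hgi : Integrable g)
    (hgmass : (∫ x, g x) = 1) (hgmom : Integrable fun x => ‖x‖ ^ 2 * g x)
    (hgmomval : (∫ x, ‖x‖ ^ 2 * g x) = ∫ x, ‖x‖ ^ 2 * barenblatt n p σ C x)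
    (hgp : Integrable fun x => g x ^ p) :
    (∫ x, g x ^ p) ≤ ∫ x, barenblatt n p σ C x ^ p := by
  set c := (1 - p) / p / (2 * σ) with hc
  have hp0 := p_pos hn hp
  have hpt : ∀ x, g x ^ p ≤ (1 - p) * barenblatt n p σ C x ^ p
      + p * (C * g x + c * (‖x‖ ^ 2 * g x)) := by
    intro x
    have ht := tangent_le (hg0 x) (B_pos_lt hn hp hplt hσ hC x) hp0 hplt
    rw [B_pow_sub_one_lt hn hp hplt hσ hC x] at ht
    calc g x ^ p ≤ (1 - p) * barenblatt n p σ C x ^ p + p * (C + c * ‖x‖ ^ 2) * g x := ht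
      _ = (1 - p) * barenblatt n p σ C x ^ p
          + p * (C * g x + c * (‖x‖ ^ 2 * g x)) := by ring
  have hI1 : Integrable (fun x => (1 - p) * barenblatt n p σ C x ^ p) :=
    (B_pow_int_lt hn hp hplt hσ hC).const_mul _
  have hI2a : Integrable (fun x => C * g x) := hgi.const_mul C
  have hI2b : Integrable (fun x => c * (‖x‖ ^ 2 * g x)) := hgmom.const_mul c
  have hI2 : Integrable (fun x => C * g x + c * (‖x‖ ^ 2 * g x)) := hI2a.add hI2b
  have hI3 : Integrable (fun x => p * (C * g x + c * (‖x‖ ^ 2 * g x))) := hI2.const_mul p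
  have hint : Integrable (fun x => (1 - p) * barenblatt n p σ C x ^ p
      + p * (C * g x + c * (‖x‖ ^ 2 * g x))) := hI1.add hI3
  have hmono := integral_mono hgp hint hpt
  have hBp : (∫ x, barenblatt n p σ C x ^ p)
      = C * 1 + c * ∫ x, ‖x‖ ^ 2 * barenblatt n p σ C x := by
    have hpt2 : (fun x => barenblatt n p σ C x ^ p)
        = fun x => C * barenblatt n p σ C x + c * (‖x‖ ^ 2 * barenblatt n p σ C x) := by
      funext x
      have hBx := B_pos_lt hn hp hplt hσ hC x
      have h1 := Real.rpow_add hBx (p - 1) 1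
      rw [sub_add_cancel, Real.rpow_one] at h1
      rw [h1, B_pow_sub_one_lt hn hp hplt hσ hC x]
      ring
    have hJ1 : Integrable (fun x => C * barenblatt n p σ C x) :=
      (B_int_lt hn hp hplt hσ hC).const_mul C
    have hJ2 : Integrable (fun x => c * (‖x‖ ^ 2 * barenblatt n p σ C x)) :=
      (B_mom_int_lt hn hp hplt hσ hC).const_mul c
    rw [hpt2, integral_add hJ1 hJ2, integral_const_mul, integral_const_mul, hBmass]
  rw [integral_add hI1 hI3, integral_const_mul, integral_const_mul, integral_add hI2a hI2b,
      integral_const_mul, integral_const_mul, hgmass, hgmomval] at hmono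
  rw [hBp] at hmono ⊢
  have hX : (1 - p) * (C * 1 + c * (∫ x, ‖x‖ ^ 2 * barenblatt n p σ C x))
      + p * (C * 1 + c * (∫ x, ‖x‖ ^ 2 * barenblatt n p σ C x))
      = C * 1 + c * (∫ x, ‖x‖ ^ 2 * barenblatt n p σ C x) := by ring
  linarith
lemma kappa_pos_gt (hpgt : 1 < p) (hσ : 0 < σ) : 0 < (p - 1) / p / (2 * σ) := by
  have h0 : 0 < p := by linarith
  have h1 : 0 < p - 1 := by linarith
  positivity

lemma B_eq_gt (hpgt : 1 < p) (x : EuclideanSpace ℝ (Fin n)) :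
    barenblatt n p σ C x
      = (max (C - ((p - 1) / p / (2 * σ)) * ‖x‖ ^ 2) 0) ^ (1 / (p - 1)) := by
  rw [barenblatt, if_neg (not_lt.mpr hpgt.le)]
  have h1 : C - (p - 1) / p * ‖x‖ ^ 2 / (2 * σ) = C - (p - 1) / p / (2 * σ) * ‖x‖ ^ 2 := by
    ring
  rw [h1]

lemma B_nonneg_gt (hpgt : 1 < p) (x : EuclideanSpace ℝ (Fin n)) :
    0 ≤ barenblatt n p σ C x := by
  rw [B_eq_gt hpgt]
  exact Real.rpow_nonneg (le_max_right _ _) _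

lemma B_cont_gt (hpgt : 1 < p) : Continuous (barenblatt n p σ C) := by
  have : barenblatt n p σ C
      = fun x => (max (C - ((p - 1) / p / (2 * σ)) * ‖x‖ ^ 2) 0) ^ (1 / (p - 1)) :=
    funext (B_eq_gt hpgt)
  rw [this]
  refine Continuous.rpow_const ?_ (fun x => Or.inr (by
    have h1 : 0 < p - 1 := by linarith
    positivity))
  exact (continuous_const.sub (continuous_const.mul (continuous_norm.pow 2))).max
    continuous_const

lemma B_zero_gt (hpgt : 1 < p) (hσ : 0 < σ) (hC : 0 < C) (x : EuclideanSpace ℝ (Fin n))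
    (hx : Real.sqrt (C / ((p - 1) / p / (2 * σ))) < ‖x‖) : barenblatt n p σ C x = 0 := by
  set κ := (p - 1) / p / (2 * σ) with hκ
  have hκp : 0 < κ := kappa_pos_gt hpgt hσ
  have h0 : 0 ≤ C / κ := by positivity
  have h1 : C / κ < ‖x‖ ^ 2 := by
    have := Real.sq_sqrt h0
    nlinarith [Real.sqrt_nonneg (C / κ), hx]
  have h2 : C - κ * ‖x‖ ^ 2 < 0 := by
    rw [div_lt_iff₀ hκp] at h1
    nlinarith
  rw [B_eq_gt hpgt, ← hκ, max_eq_right h2.le,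
    Real.zero_rpow (one_div_ne_zero (by intro h; apply hpgt.ne'; linarith [sub_eq_zero.mp h]))]

lemma B_hcs_gt (hpgt : 1 < p) (hσ : 0 < σ) (hC : 0 < C) {F : ℝ → ℝ} (hF : F 0 = 0) :
    HasCompactSupport (fun x : EuclideanSpace ℝ (Fin n) => F (barenblatt n p σ C x)) := by
  apply HasCompactSupport.intro
    (isCompact_closedBall (0 : EuclideanSpace ℝ (Fin n))
      (Real.sqrt (C / ((p - 1) / p / (2 * σ)))))
  intro x hx
  simp only [Metric.mem_closedBall, dist_zero_right, not_le] at hx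
  rw [B_zero_gt hpgt hσ hC x hx, hF]

lemma B_int_gt (hpgt : 1 < p) (hσ : 0 < σ) (hC : 0 < C) :
    Integrable (barenblatt n p σ C) := by
  apply (B_cont_gt hpgt).integrable_of_hasCompactSupport
  apply HasCompactSupport.intro
    (isCompact_closedBall (0 : EuclideanSpace ℝ (Fin n))
      (Real.sqrt (C / ((p - 1) / p / (2 * σ)))))
  intro x hx
  simp only [Metric.mem_closedBall, dist_zero_right, not_le] at hx
  exact B_zero_gt hpgt hσ hC x hx

lemma B_mom_int_gt (hpgt : 1 < p) (hσ : 0 < σ) (hC : 0 < C) :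
    Integrable (fun x => ‖x‖ ^ 2 * barenblatt n p σ C x) := by
  apply Continuous.integrable_of_hasCompactSupport
    ((continuous_norm.pow 2).mul (B_cont_gt hpgt))
  apply HasCompactSupport.intro
    (isCompact_closedBall (0 : EuclideanSpace ℝ (Fin n))
      (Real.sqrt (C / ((p - 1) / p / (2 * σ)))))
  intro x hx
  simp only [Metric.mem_closedBall, dist_zero_right, not_le] at hx
  rw [Pi.mul_apply, B_zero_gt hpgt hσ hC x hx, mul_zero]

lemma B_pow_int_gt (hpgt : 1 < p) (hσ : 0 < σ) (hC : 0 < C) :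
    Integrable (fun x => barenblatt n p σ C x ^ p) := by
  apply Continuous.integrable_of_hasCompactSupport
    (Continuous.rpow_const (B_cont_gt hpgt) (fun x => Or.inr (by linarith)))
  exact B_hcs_gt hpgt hσ hC (F := fun t => t ^ p)
    (Real.zero_rpow (by positivity : p ≠ 0))

lemma B_pow_sub_one_gt (hpgt : 1 < p) (x : EuclideanSpace ℝ (Fin n)) :
    barenblatt n p σ C x ^ (p - 1) = max (C - ((p - 1) / p / (2 * σ)) * ‖x‖ ^ 2) 0 := by
  have hp1 : p - 1 ≠ 0 := by intro h; apply hpgt.ne'; linarith [sub_eq_zero.mp h]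
  rcases le_or_gt (C - ((p - 1) / p / (2 * σ)) * ‖x‖ ^ 2) 0 with h | h
  · rw [B_eq_gt hpgt, max_eq_right h, Real.zero_rpow (one_div_ne_zero hp1),
      Real.zero_rpow hp1]
  · rw [B_eq_gt hpgt, max_eq_left h.le, ← Real.rpow_mul h.le,
      one_div, inv_mul_cancel₀ hp1, Real.rpow_one]

lemma B_pow_eq_gt (hpgt : 1 < p) (x : EuclideanSpace ℝ (Fin n)) :
    barenblatt n p σ C x ^ p
      = (C - ((p - 1) / p / (2 * σ)) * ‖x‖ ^ 2) * barenblatt n p σ C x := by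
  have hp1 : p - 1 ≠ 0 := by intro h; apply hpgt.ne'; linarith [sub_eq_zero.mp h]
  rcases le_or_gt (C - ((p - 1) / p / (2 * σ)) * ‖x‖ ^ 2) 0 with h | h
  · have hB0 : barenblatt n p σ C x = 0 := by
      rw [B_eq_gt hpgt, max_eq_right h, Real.zero_rpow (one_div_ne_zero hp1)]
    rw [hB0, Real.zero_rpow (by positivity : p ≠ 0), mul_zero]
  · rw [B_eq_gt hpgt, max_eq_left h.le, ← Real.rpow_mul h.le]
    have h2 : (C - ((p - 1) / p / (2 * σ)) * ‖x‖ ^ 2) ^ ((1 : ℝ))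
        * (C - ((p - 1) / p / (2 * σ)) * ‖x‖ ^ 2) ^ (1 / (p - 1))
        = (C - ((p - 1) / p / (2 * σ)) * ‖x‖ ^ 2) ^ (1 + 1 / (p - 1)) :=
      (Real.rpow_add h 1 (1 / (p - 1))).symm
    rw [Real.rpow_one] at h2
    rw [h2]
    congr 1
    field_simp
    ring

lemma key_int_gt (hn : 1 ≤ n) (hp : (n : ℝ) / (n + 2) < p) (hpgt : 1 < p) (hσ : 0 < σ)
    (hC : 0 < C) (hBmass : (∫ x, barenblatt n p σ C x) = 1)
    (g : EuclideanSpace ℝ (Fin n) → ℝ) (hg0 : ∀ x, 0 ≤ g x) (hgi : Integrable g)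
    (hgmass : (∫ x, g x) = 1) (hgmom : Integrable fun x => ‖x‖ ^ 2 * g x)
    (hgmomval : (∫ x, ‖x‖ ^ 2 * g x) = ∫ x, ‖x‖ ^ 2 * barenblatt n p σ C x)
    (hgp : Integrable fun x => g x ^ p) :
    (∫ x, barenblatt n p σ C x ^ p) ≤ ∫ x, g x ^ p := by
  set κ := (p - 1) / p / (2 * σ) with hκ
  have hp0 : (0 : ℝ) < p := by linarith
  have hpt : ∀ x, (1 - p) * barenblatt n p σ C x ^ p
      + p * (C * g x - κ * (‖x‖ ^ 2 * g x)) ≤ g x ^ p := by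
    intro x
    have ht := tangent_ge (hg0 x) (B_nonneg_gt (σ := σ) (C := C) hpgt x) hpgt
    rw [B_pow_sub_one_gt hpgt x, ← hκ] at ht
    have h2 : (C - κ * ‖x‖ ^ 2) * g x ≤ max (C - κ * ‖x‖ ^ 2) 0 * g x :=
      mul_le_mul_of_nonneg_right (le_max_left _ _) (hg0 x)
    have h3 : p * ((C - κ * ‖x‖ ^ 2) * g x) ≤ p * (max (C - κ * ‖x‖ ^ 2) 0 * g x) :=
      mul_le_mul_of_nonneg_left h2 hp0.le
    have h4 : C * g x - κ * (‖x‖ ^ 2 * g x) = (C - κ * ‖x‖ ^ 2) * g x := by ring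
    rw [h4]
    nlinarith [ht, h3]
  have hI1 : Integrable (fun x => (1 - p) * barenblatt n p σ C x ^ p) :=
    (B_pow_int_gt hpgt hσ hC).const_mul _
  have hI2a : Integrable (fun x => C * g x) := hgi.const_mul C
  have hI2b : Integrable (fun x => κ * (‖x‖ ^ 2 * g x)) := hgmom.const_mul κ
  have hI2 : Integrable (fun x => C * g x - κ * (‖x‖ ^ 2 * g x)) := hI2a.sub hI2b
  have hI3 : Integrable (fun x => p * (C * g x - κ * (‖x‖ ^ 2 * g x))) := hI2.const_mul p
  have hint : Integrable (fun x => (1 - p) * barenblatt n p σ C x ^ p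
      + p * (C * g x - κ * (‖x‖ ^ 2 * g x))) := hI1.add hI3
  have hmono := integral_mono hint hgp hpt
  have hBp : (∫ x, barenblatt n p σ C x ^ p)
      = C * 1 - κ * ∫ x, ‖x‖ ^ 2 * barenblatt n p σ C x := by
    have hpt2 : (fun x => barenblatt n p σ C x ^ p)
        = fun x => C * barenblatt n p σ C x - κ * (‖x‖ ^ 2 * barenblatt n p σ C x) := by
      funext x
      rw [B_pow_eq_gt hpgt x, ← hκ]
      ring
    have hJ1 : Integrable (fun x => C * barenblatt n p σ C x) :=
      (B_int_gt hpgt hσ hC).const_mul C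
    have hJ2 : Integrable (fun x => κ * (‖x‖ ^ 2 * barenblatt n p σ C x)) :=
      (B_mom_int_gt hpgt hσ hC).const_mul κ
    rw [hpt2, integral_sub hJ1 hJ2, integral_const_mul, integral_const_mul, hBmass]
  rw [integral_add hI1 hI3, integral_const_mul, integral_const_mul, integral_sub hI2a hI2b,
      integral_const_mul, integral_const_mul, hgmass, hgmomval] at hmono
  rw [hBp] at hmono ⊢
  have hX : (1 - p) * (C * 1 - κ * (∫ x, ‖x‖ ^ 2 * barenblatt n p σ C x))
      + p * (C * 1 - κ * (∫ x, ‖x‖ ^ 2 * barenblatt n p σ C x))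
      = C * 1 - κ * (∫ x, ‖x‖ ^ 2 * barenblatt n p σ C x) := by ring
  linarith
lemma mom_pos (hn : 1 ≤ n) {B : EuclideanSpace ℝ (Fin n) → ℝ}
    (hB0 : ∀ x, 0 ≤ B x) (hBi : Integrable B) (hBmass : (∫ x, B x) = 1)
    (hBmom : Integrable fun x => ‖x‖ ^ 2 * B x) :
    0 < ∫ x, ‖x‖ ^ 2 * B x := by
  haveI : Nonempty (Fin n) := Fin.pos_iff_nonempty.mp hn
  haveI : Nontrivial (EuclideanSpace ℝ (Fin n)) := inferInstance
  have hsupp : 0 < volume (Function.support B) :=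
    (integral_pos_iff_support_of_nonneg hB0 hBi).mp (by rw [hBmass]; norm_num)
  have hsub : Function.support B \ {0} ⊆ Function.support (fun x => ‖x‖ ^ 2 * B x) := by
    intro x hx
    obtain ⟨hxB, hx0⟩ := hx
    simp only [Function.mem_support] at hxB ⊢
    simp only [Set.mem_singleton_iff] at hx0
    intro hcon
    rcases mul_eq_zero.mp hcon with h | h
    · apply hx0
      have : ‖x‖ = 0 := by
        have := pow_eq_zero_iff (n := 2) (by norm_num) |>.mp h
        exact this
      exact norm_eq_zero.mp this
    · exact hxB h
  have h0 : volume (Function.support B \ {0}) = volume (Function.support B) :=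
    measure_diff_null (measure_singleton 0)
  refine (integral_pos_iff_support_of_nonneg
    (fun x => mul_nonneg (by positivity) (hB0 x)) hBmom).mpr ?_
  calc (0 : ENNReal) < volume (Function.support B) := hsupp
    _ = volume (Function.support B \ {0}) := h0.symm
    _ ≤ volume (Function.support (fun x => ‖x‖ ^ 2 * B x)) := measure_mono hsub

lemma pow_pos_int {p : ℝ} (hp0 : 0 < p) {B : EuclideanSpace ℝ (Fin n) → ℝ}
    (hB0 : ∀ x, 0 ≤ B x) (hBi : Integrable B) (hBmass : (∫ x, B x) = 1)
    (hBp : Integrable fun x => B x ^ p) :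
    0 < ∫ x, B x ^ p := by
  have hsupp : 0 < volume (Function.support B) :=
    (integral_pos_iff_support_of_nonneg hB0 hBi).mp (by rw [hBmass]; norm_num)
  have hsub : Function.support B ⊆ Function.support (fun x => B x ^ p) := by
    intro x hx
    simp only [Function.mem_support] at hx ⊢
    have hBx : 0 < B x := lt_of_le_of_ne (hB0 x) (Ne.symm hx)
    exact ne_of_gt (Real.rpow_pos_of_pos hBx p)
  refine (integral_pos_iff_support_of_nonneg
    (fun x => Real.rpow_nonneg (hB0 x) p) hBp).mpr ?_
  exact hsupp.trans_le (measure_mono hsub)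

lemma B_nonneg_any (hn : 1 ≤ n) (hp : (n : ℝ) / (n + 2) < p) (hp1 : p ≠ 1) (hσ : 0 < σ)
    (hC : 0 < C) (x : EuclideanSpace ℝ (Fin n)) : 0 ≤ barenblatt n p σ C x := by
  rcases lt_or_gt_of_ne hp1 with hplt | hpgt
  · exact (B_pos_lt hn hp hplt hσ hC x).le
  · exact B_nonneg_gt hpgt x

lemma B_int_any (hn : 1 ≤ n) (hp : (n : ℝ) / (n + 2) < p) (hp1 : p ≠ 1) (hσ : 0 < σ)
    (hC : 0 < C) : Integrable (barenblatt n p σ C) := by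
  rcases lt_or_gt_of_ne hp1 with hplt | hpgt
  · exact B_int_lt hn hp hplt hσ hC
  · exact B_int_gt hpgt hσ hC

lemma B_mom_int_any (hn : 1 ≤ n) (hp : (n : ℝ) / (n + 2) < p) (hp1 : p ≠ 1) (hσ : 0 < σ)
    (hC : 0 < C) : Integrable (fun x => ‖x‖ ^ 2 * barenblatt n p σ C x) := by
  rcases lt_or_gt_of_ne hp1 with hplt | hpgt
  · exact B_mom_int_lt hn hp hplt hσ hC
  · exact B_mom_int_gt hpgt hσ hC

lemma key_log (hn : 1 ≤ n) (hp : (n : ℝ) / (n + 2) < p) (hp1 : p ≠ 1) (hσ : 0 < σ)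
    (hC : 0 < C) (hBmass : (∫ x, barenblatt n p σ C x) = 1)
    (g : EuclideanSpace ℝ (Fin n) → ℝ) (hg0 : ∀ x, 0 ≤ g x) (hgi : Integrable g)
    (hgmass : (∫ x, g x) = 1) (hgmom : Integrable fun x => ‖x‖ ^ 2 * g x)
    (hgmomval : (∫ x, ‖x‖ ^ 2 * g x) = ∫ x, ‖x‖ ^ 2 * barenblatt n p σ C x)
    (hgp : Integrable fun x => g x ^ p) (hgp0 : 0 < ∫ x, g x ^ p) :
    1 / (1 - p) * Real.log (∫ x, g x ^ p)
      ≤ 1 / (1 - p) * Real.log (∫ x, barenblatt n p σ C x ^ p) := by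
  rcases lt_or_gt_of_ne hp1 with hplt | hpgt
  · have h := key_int_lt hn hp hplt hσ hC hBmass g hg0 hgi hgmass hgmom hgmomval hgp
    have hcoef : 0 ≤ 1 / (1 - p) := by
      have h1 : (0:ℝ) < 1 - p := by linarith
      positivity
    exact mul_le_mul_of_nonneg_left (Real.log_le_log hgp0 h) hcoef
  · have h := key_int_gt hn hp hpgt hσ hC hBmass g hg0 hgi hgmass hgmom hgmomval hgp
    have hBp0 : 0 < ∫ x, barenblatt n p σ C x ^ p :=
      pow_pos_int (by linarith : (0:ℝ) < p) (B_nonneg_gt hpgt) (B_int_gt hpgt hσ hC) hBmass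
        (B_pow_int_gt hpgt hσ hC)
    have hcoef : 1 / (1 - p) ≤ 0 :=
      le_of_lt (div_neg_of_pos_of_neg one_pos (by linarith))
    exact mul_le_mul_of_nonpos_left (Real.log_le_log hBp0 h) hcoef

/-- **Maximality of Barenblatt profiles for the scale-invariant functional.**
Let `n ≥ 1` and `p > n/(n+2)`, `p ≠ 1`.  Every probability density `f` on `ℝⁿ` with
bounded second moment `E(f)` satisfies, for every `σ > 0`,
`R_p(f) − (n/2) log E(f) ≤ R_p(B_σ) − (n/2) log E(B_σ)`,
where `B_σ` is the (unit-mass) Barenblatt profile of parameter `σ`. -/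
theorem renyi_second_moment_functional_le_barenblatt
    (n : ℕ) (hn : 1 ≤ n) (p : ℝ) (hp : (n : ℝ) / (n + 2) < p) (hp1 : p ≠ 1)
    (f : EuclideanSpace ℝ (Fin n) → ℝ)
    (hnonneg : ∀ x, 0 ≤ f x)
    (hfi : Integrable f) (hmass : (∫ x, f x) = 1)
    (hmom : Integrable fun x => ‖x‖ ^ 2 * f x) (hmompos : 0 < energy n f)
    (hfp : Integrable fun x => f x ^ p) (hfp0 : 0 < ∫ x, f x ^ p)
    (σ : ℝ) (hσ : 0 < σ) (C : ℝ) (hC : 0 < C)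
    (hBmass : (∫ x, barenblatt n p σ C x) = 1) :
    Rp n p f - ((n : ℝ) / 2) * Real.log (energy n f) ≤
      Rp n p (barenblatt n p σ C) -
        ((n : ℝ) / 2) * Real.log (energy n (barenblatt n p σ C)) := by
  have hB0 := B_nonneg_any hn hp hp1 hσ hC
  have hBi := B_int_any hn hp hp1 hσ hC
  have hBmom := B_mom_int_any hn hp hp1 hσ hC
  have hEB : 0 < energy n (barenblatt n p σ C) := by
    rw [energy]; exact mom_pos hn hB0 hBi hBmass hBmom
  have hEf : 0 < energy n f := hmompos
  set lam := Real.sqrt (energy n f / energy n (barenblatt n p σ C)) with hlamdef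
  have hlam0 : 0 < lam := Real.sqrt_pos.mpr (div_pos hEf hEB)
  have hlamsq : lam ^ 2 = energy n f / energy n (barenblatt n p σ C) :=
    Real.sq_sqrt (le_of_lt (div_pos hEf hEB))
  set L := lam ^ n with hLdef
  have hL0 : 0 < L := pow_pos hlam0 n
  set g := fun x : EuclideanSpace ℝ (Fin n) => L * f (lam • x) with hgdef
  have hg0 : ∀ x, 0 ≤ g x := fun x => mul_nonneg hL0.le (hnonneg _)
  have hfin : finrank ℝ (EuclideanSpace ℝ (Fin n)) = n := finrank_euclideanSpace_fin
  have hscale : ∀ h : EuclideanSpace ℝ (Fin n) → ℝ,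
      (∫ x, h (lam • x)) = L⁻¹ * ∫ x, h x := by
    intro h
    rw [Measure.integral_comp_smul_of_nonneg volume h lam (hR := hlam0.le), hfin,
      smul_eq_mul]
  have hgi : Integrable g := (hfi.comp_smul hlam0.ne').const_mul L
  have hgmass : (∫ x, g x) = 1 := by
    simp only [hgdef]
    rw [integral_const_mul, hscale f, hmass, mul_one, mul_inv_cancel₀ hL0.ne']
  -- second moment of g
  have hmom_pt : ∀ x : EuclideanSpace ℝ (Fin n),
      ‖x‖ ^ 2 * g x = (L * (lam ^ 2)⁻¹) * (‖lam • x‖ ^ 2 * f (lam • x)) := by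
    intro x
    have hnx : ‖lam • x‖ = lam * ‖x‖ := by
      rw [norm_smul, Real.norm_eq_abs, abs_of_pos hlam0]
    simp only [hgdef, hnx]
    field_simp
  have hgmom : Integrable (fun x => ‖x‖ ^ 2 * g x) := by
    have : (fun x : EuclideanSpace ℝ (Fin n) => ‖x‖ ^ 2 * g x)
        = fun x => (L * (lam ^ 2)⁻¹) * ((fun y => ‖y‖ ^ 2 * f y) (lam • x)) :=
      funext hmom_pt
    rw [this]
    exact (hmom.comp_smul hlam0.ne').const_mul _
  have hgmomval : (∫ x, ‖x‖ ^ 2 * g x) = (lam ^ 2)⁻¹ * energy n f := by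
    have h1 : (fun x : EuclideanSpace ℝ (Fin n) => ‖x‖ ^ 2 * g x)
        = fun x => (L * (lam ^ 2)⁻¹) * ((fun y => ‖y‖ ^ 2 * f y) (lam • x)) :=
      funext hmom_pt
    rw [h1, integral_const_mul, hscale (fun y => ‖y‖ ^ 2 * f y)]
    rw [energy]
    field_simp
  have hgmomB : (∫ x, ‖x‖ ^ 2 * g x) = ∫ x, ‖x‖ ^ 2 * barenblatt n p σ C x := by
    rw [hgmomval]
    have h2 : energy n (barenblatt n p σ C) = ∫ x, ‖x‖ ^ 2 * barenblatt n p σ C x := rfl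
    rw [← h2, hlamsq]
    field_simp
  -- p-th power of g
  have hgp_pt : ∀ x : EuclideanSpace ℝ (Fin n), g x ^ p = L ^ p * f (lam • x) ^ p := by
    intro x
    simp only [hgdef]
    exact Real.mul_rpow hL0.le (hnonneg _)
  have hgp : Integrable (fun x => g x ^ p) := by
    have : (fun x : EuclideanSpace ℝ (Fin n) => g x ^ p)
        = fun x => L ^ p * ((fun y => f y ^ p) (lam • x)) := funext hgp_pt
    rw [this]
    exact (hfp.comp_smul hlam0.ne').const_mul _
  have hgpval : (∫ x, g x ^ p) = L ^ (p - 1) * ∫ x, f x ^ p := by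
    have h1 : (fun x : EuclideanSpace ℝ (Fin n) => g x ^ p)
        = fun x => L ^ p * ((fun y => f y ^ p) (lam • x)) := funext hgp_pt
    rw [h1, integral_const_mul, hscale (fun y => f y ^ p)]
    rw [Real.rpow_sub hL0, Real.rpow_one]
    ring
  have hgp0 : 0 < ∫ x, g x ^ p := by
    rw [hgpval]
    exact mul_pos (Real.rpow_pos_of_pos hL0 _) hfp0
  have hkey := key_log hn hp hp1 hσ hC hBmass g hg0 hgi hgmass hgmom hgmomB hgp hgp0
  -- translate hkey to Rp
  have hkey' : Rp n p g ≤ Rp n p (barenblatt n p σ C) := by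
    rw [Rp, Rp]
    exact hkey
  -- scale identities for Rp and energy
  have h1p : (1 : ℝ) - p ≠ 0 := by
    intro h
    exact hp1 (by linarith)
  have hRpg : Rp n p g = Rp n p f - (n : ℝ) * Real.log lam := by
    rw [Rp, Rp, hgpval,
      Real.log_mul (ne_of_gt (Real.rpow_pos_of_pos hL0 _)) (ne_of_gt hfp0),
      Real.log_rpow hL0, hLdef, Real.log_pow]
    field_simp
    ring
  have hlogEf : Real.log (energy n f)
      = 2 * Real.log lam + Real.log (energy n (barenblatt n p σ C)) := by
    have hEfeq : energy n f = lam ^ 2 * energy n (barenblatt n p σ C) := by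
      rw [hlamsq]
      field_simp
    rw [hEfeq, Real.log_mul (by positivity) hEB.ne', Real.log_pow]
    norm_num
  have hlogEg : Real.log (energy n g) = Real.log (energy n (barenblatt n p σ C)) := by
    rw [energy, hgmomB]
    rfl
  rw [hlogEf]
  linarith [hkey', hRpg]
end PLt
end
end

section
/- Let n ≥ 1 and p > n/(n+2), p ≠ 1. Then for every probability density f on ℝⁿ with bounded second moment, R_p(B_{σ(f)}) − R_p(f) ≥ 0, where B_{σ(f)} denotes the Barenblatt profile with the same second moment as f. Equivalently, the relative Rényi entropy 𝔥_p(f) is nonnegative. -/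
open MeasureTheory Real Filter
open scoped Topology

noncomputable section

lemma memLp_rpow_of_integrable {α : Type*} [MeasurableSpace α] {μ : Measure α}
    {w : α → ℝ} (hw : Integrable w μ) (hnn : ∀ x, 0 ≤ w x) {r : ℝ} (hr : 0 < r) :
    MemLp (fun x => w x ^ r) (ENNReal.ofReal (1 / r)) μ := by
  have hq0 : ENNReal.ofReal r ≠ 0 := by
    simp [ENNReal.ofReal_eq_zero, not_le, hr]
  have h := (memLp_norm_rpow_iff (p := 1) (q := ENNReal.ofReal r)
      hw.aestronglyMeasurable hq0 ENNReal.ofReal_ne_top).2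
      (memLp_one_iff_integrable.2 hw)
  have heq : (fun x => ‖w x‖ ^ (ENNReal.ofReal r).toReal) = fun x => w x ^ r := by
    funext x
    rw [Real.norm_of_nonneg (hnn x), ENNReal.toReal_ofReal hr.le]
  rw [heq] at h
  convert h using 1
  rw [one_div, one_div, ENNReal.ofReal_inv_of_pos hr]

lemma holder_aux {α : Type*} [MeasurableSpace α] {μ : Measure α} {u v : α → ℝ} {s t : ℝ}
    (hs : 0 < s) (ht : 0 < t) (hst : s + t = 1)
    (hun : ∀ x, 0 ≤ u x) (hvn : ∀ x, 0 ≤ v x)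
    (hu : Integrable u μ) (hv : Integrable v μ) :
    ∫ x, u x ^ s * v x ^ t ∂μ ≤ (∫ x, u x ∂μ) ^ s * (∫ x, v x ∂μ) ^ t := by
  have hs1 : s < 1 := by linarith
  have hpq : Real.HolderConjugate (1 / s) (1 / t) := by
    rw [Real.holderConjugate_iff]
    constructor
    · rw [lt_div_iff₀ hs]; linarith
    · rw [one_div, one_div, inv_inv, inv_inv]; exact hst
  have hmu := memLp_rpow_of_integrable hu hun hs
  have hmv := memLp_rpow_of_integrable hv hvn ht
  have h := MeasureTheory.integral_mul_le_Lp_mul_Lq_of_nonneg hpq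
      (Eventually.of_forall fun x => Real.rpow_nonneg (hun x) s)
      (Eventually.of_forall fun x => Real.rpow_nonneg (hvn x) t) hmu hmv
  have h1 : ∀ x, (u x ^ s) ^ (1 / s) = u x := fun x => by
    rw [← Real.rpow_mul (hun x), mul_one_div, div_self hs.ne', Real.rpow_one]
  have h2 : ∀ x, (v x ^ t) ^ (1 / t) = v x := fun x => by
    rw [← Real.rpow_mul (hvn x), mul_one_div, div_self ht.ne', Real.rpow_one]
  simp_rw [h1, h2, one_div_one_div] at h
  exact h

/-- `B` is the Barenblatt profile with unit mass whose second moment equals that of `f`. -/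
def IsMatchedBarenblatt (n : ℕ) (p : ℝ) (f B : EuclideanSpace ℝ (Fin n) → ℝ) : Prop :=
  ∃ σ C : ℝ, 0 < σ ∧ 0 < C ∧ B = barenblatt n p σ C ∧
    (∫ x, B x) = 1 ∧ (∫ x, ‖x‖ ^ 2 * B x) = ∫ x, ‖x‖ ^ 2 * f x

/-- **Nonnegativity of the relative Rényi entropy.**
Let `n ≥ 1` and `p > n/(n+2)`, `p ≠ 1`.  For every probability density `f` on `ℝⁿ` with
bounded second moment, `R_p(B_{σ(f)}) − R_p(f) ≥ 0`, where `B_{σ(f)}` is the Barenblatt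
profile with the same second moment as `f`; i.e. the relative Rényi entropy
`𝔥_p(f)` is nonnegative. -/
theorem relative_renyi_entropy_nonneg
    (n : ℕ) (hn : 1 ≤ n) (p : ℝ) (hp : (n : ℝ) / (n + 2) < p) (hp1 : p ≠ 1)
    (f : EuclideanSpace ℝ (Fin n) → ℝ)
    (hnonneg : ∀ x, 0 ≤ f x)
    (hfi : Integrable f) (hmass : (∫ x, f x) = 1)
    (hmom : Integrable fun x => ‖x‖ ^ 2 * f x)
    (hfp : Integrable fun x => f x ^ p) (hfp0 : 0 < ∫ x, f x ^ p)
    (B : EuclideanSpace ℝ (Fin n) → ℝ)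
    (hB : IsMatchedBarenblatt n p f B) :
    0 ≤ Rp n p B - Rp n p f := by
  obtain ⟨σ, C, hσ, hC, hBdef, hBmass, hBmom⟩ := hB
  have hp0 : 0 < p := lt_of_le_of_lt (by positivity) hp
  have hp1' : p - 1 ≠ 0 := sub_ne_zero.2 hp1
  set M := ∫ x, ‖x‖ ^ 2 * f x with hMdef
  have hMnn : 0 ≤ M := integral_nonneg fun x => mul_nonneg (by positivity) (hnonneg x)
  -- the second moment of f is nonzero
  have hMne : M ≠ 0 := by
    intro h0
    have hae0 : (fun x => ‖x‖ ^ 2 * f x) =ᵐ[volume] 0 :=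
      (integral_eq_zero_iff_of_nonneg (fun x => mul_nonneg (by positivity) (hnonneg x)) hmom).1 h0
    haveI : Nontrivial (EuclideanSpace ℝ (Fin n)) := by
      refine ⟨⟨EuclideanSpace.single ⟨0, by omega⟩ (1 : ℝ), 0, fun h => ?_⟩⟩
      have := congrArg norm h
      rw [EuclideanSpace.norm_single, norm_zero] at this
      norm_num at this
    have hae1 : ∀ᵐ x : EuclideanSpace ℝ (Fin n), x ≠ 0 := by
      have hs : {x : EuclideanSpace ℝ (Fin n) | ¬ x ≠ 0} = {0} := by ext x; simp
      rw [ae_iff, hs]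
      exact measure_singleton 0
    have hf0 : f =ᵐ[volume] 0 := by
      filter_upwards [hae0, hae1] with x hx hx0
      have hn2 : ‖x‖ ^ 2 ≠ 0 := pow_ne_zero 2 (norm_ne_zero_iff.2 hx0)
      simpa [hn2] using hx
    rw [integral_congr_ae hf0] at hmass
    simp at hmass
  have hM : 0 < M := hMnn.lt_of_ne (Ne.symm hMne)
  -- integrability of B and of its second moment, from the junk-value convention
  have hBint : Integrable B := by
    by_contra h
    rw [integral_undef h] at hBmass
    norm_num at hBmass
  have hBmom_int : Integrable fun x => ‖x‖ ^ 2 * B x := by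
    by_contra h
    rw [integral_undef h] at hBmom
    exact hMne hBmom.symm
  have hBnn : ∀ x, 0 ≤ B x := by
    intro x
    rw [hBdef]
    unfold barenblatt
    split_ifs with h
    · apply Real.rpow_nonneg
      have : 0 ≤ (1 - p) / p * ‖x‖ ^ 2 / (2 * σ) :=
        div_nonneg (mul_nonneg (div_nonneg (by linarith) hp0.le) (by positivity)) (by positivity)
      linarith
    · exact Real.rpow_nonneg (le_max_right _ _) _
  rcases lt_or_gt_of_ne hp1 with hplt | hpgt
  · -- case p < 1
    set g := fun y : EuclideanSpace ℝ (Fin n) => C + (1 - p) / p * ‖y‖ ^ 2 / (2 * σ) with hgdef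
    have hgpos : ∀ y, 0 < g y := by
      intro y
      have : 0 ≤ (1 - p) / p * ‖y‖ ^ 2 / (2 * σ) :=
        div_nonneg (mul_nonneg (div_nonneg (by linarith) hp0.le) (by positivity)) (by positivity)
      simp only [hgdef]
      linarith
    have hBg : ∀ y, B y = g y ^ (1 / (p - 1)) := by
      intro y
      rw [hBdef]
      simp only [barenblatt, if_pos hplt, hgdef]
    have hBpow : ∀ y, B y ^ p = B y * g y := by
      intro y
      rw [hBg y, ← Real.rpow_mul (hgpos y).le]
      have he : 1 / (p - 1) * p = 1 / (p - 1) + 1 := by field_simp; ring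
      rw [he, Real.rpow_add (hgpos y), Real.rpow_one]
    set k := (1 - p) / p / (2 * σ) with hkdef
    have hk : 0 < k := div_pos (div_pos (by linarith) hp0) (by linarith)
    have hueq : (fun x => f x * g x)
        = fun x => C * f x + k * (‖x‖ ^ 2 * f x) := by
      funext x; simp only [hgdef, hkdef]; ring
    have hveq : (fun x => B x * g x)
        = fun x => C * B x + k * (‖x‖ ^ 2 * B x) := by
      funext x; simp only [hgdef, hkdef]; ring
    have hu : Integrable (fun x => f x * g x) := by
      rw [hueq]; exact (hfi.const_mul C).add (hmom.const_mul k)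
    have hv : Integrable (fun x => B x * g x) := by
      rw [hveq]; exact (hBint.const_mul C).add (hBmom_int.const_mul k)
    have hIu : ∫ x, f x * g x = C + k * M := by
      rw [hueq, integral_add (hfi.const_mul C) (hmom.const_mul k),
        integral_const_mul, integral_const_mul, hmass, mul_one]
    have hIv : ∫ x, B x * g x = C + k * M := by
      rw [hveq, integral_add (hBint.const_mul C) (hBmom_int.const_mul k),
        integral_const_mul, integral_const_mul, hBmass, mul_one, hBmom]
    have hS : 0 < C + k * M := by positivity
    have hIBp : ∫ x, B x ^ p = C + k * M := by
      rw [integral_congr_ae (Eventually.of_forall hBpow), hIv]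
    -- pointwise identity for Hölder
    have hkey : ∀ x, (f x * g x) ^ p * (B x * g x) ^ (1 - p) = f x ^ p := by
      intro x
      have e1 : 1 / (p - 1) * (1 - p) = -1 := by field_simp; ring
      have hBval : B x ^ (1 - p) = (g x)⁻¹ := by
        rw [hBg x, ← Real.rpow_mul (hgpos x).le, e1, Real.rpow_neg_one]
      rw [Real.mul_rpow (hnonneg x) (hgpos x).le, Real.mul_rpow (hBnn x) (hgpos x).le, hBval]
      have e2 : g x ^ p * ((g x)⁻¹ * g x ^ (1 - p)) = 1 := by
        rw [← Real.rpow_neg_one (g x), ← Real.rpow_add (hgpos x), ← Real.rpow_add (hgpos x)]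
        have : p + (-1 + (1 - p)) = 0 := by ring
        rw [this, Real.rpow_zero]
      calc f x ^ p * g x ^ p * ((g x)⁻¹ * g x ^ (1 - p))
          = f x ^ p * (g x ^ p * ((g x)⁻¹ * g x ^ (1 - p))) := by ring
        _ = f x ^ p := by rw [e2, mul_one]
    have hH := holder_aux hp0 (by linarith : (0:ℝ) < 1 - p) (by ring)
      (fun x => mul_nonneg (hnonneg x) (hgpos x).le)
      (fun x => mul_nonneg (hBnn x) (hgpos x).le) hu hv
    rw [integral_congr_ae (Eventually.of_forall hkey), hIu, hIv,
      ← Real.rpow_add hS, show p + (1 - p) = 1 by ring, Real.rpow_one] at hH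
    -- conclude
    have hJI : ∫ x, f x ^ p ≤ ∫ x, B x ^ p := by rw [hIBp]; exact hH
    unfold Rp
    rw [← mul_sub]
    apply mul_nonneg
    · apply div_nonneg zero_le_one; linarith
    · exact sub_nonneg.2 (Real.log_le_log hfp0 hJI)
  · -- case p > 1
    set ℓ := fun y : EuclideanSpace ℝ (Fin n) => C - (p - 1) / p * ‖y‖ ^ 2 / (2 * σ) with hldef
    set hfun := fun y : EuclideanSpace ℝ (Fin n) => max (ℓ y) 0 with hhdef
    have hBh : ∀ y, B y = hfun y ^ (1 / (p - 1)) := by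
      intro y
      rw [hBdef]
      simp only [barenblatt, if_neg (not_lt.2 hpgt.le), hhdef, hldef]
    have hhnn : ∀ y, 0 ≤ hfun y := fun y => le_max_right _ _
    have hhleC : ∀ y, hfun y ≤ C := by
      intro y
      apply max_le _ hC.le
      have : 0 ≤ (p - 1) / p * ‖y‖ ^ 2 / (2 * σ) :=
        div_nonneg (mul_nonneg (div_nonneg (by linarith) hp0.le) (by positivity)) (by positivity)
      simp only [hldef]
      linarith
    have hhcont : Continuous hfun := by
      apply Continuous.max _ continuous_const
      exact continuous_const.sub ((continuous_const.mul (continuous_norm.pow 2)).div_const _)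
    have hBpm : ∀ y, B y ^ (p - 1) = hfun y := by
      intro y
      rw [hBh y, ← Real.rpow_mul (hhnn y), one_div, inv_mul_cancel₀ hp1', Real.rpow_one]
    have hBp : ∀ y, B y ^ p = B y * hfun y := by
      intro y
      by_cases hy : B y = 0
      · rw [hy, Real.zero_rpow hp0.ne', zero_mul]
      · have hBy : 0 < B y := (hBnn y).lt_of_ne (Ne.symm hy)
        have : B y ^ p = B y ^ (1 + (p - 1)) := by norm_num
        rw [this, Real.rpow_add hBy, Real.rpow_one, hBpm]
    have hBl : ∀ y, B y * hfun y = B y * ℓ y := by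
      intro y
      by_cases hy : 0 ≤ ℓ y
      · rw [show hfun y = ℓ y from max_eq_left hy]
      · have h0 : hfun y = 0 := max_eq_right (le_of_lt (not_le.1 hy))
        have hB0 : B y = 0 := by
          rw [hBh y, h0, Real.zero_rpow (one_div_ne_zero hp1')]
        simp [hB0]
    set k := (p - 1) / p / (2 * σ) with hkdef
    have hleq : (fun x => f x * ℓ x) = fun x => C * f x - k * (‖x‖ ^ 2 * f x) := by
      funext x; simp only [hldef, hkdef]; ring
    have hBleq : (fun x => B x * ℓ x) = fun x => C * B x - k * (‖x‖ ^ 2 * B x) := by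
      funext x; simp only [hldef, hkdef]; ring
    have hfl : Integrable (fun x => f x * ℓ x) := by
      rw [hleq]; exact (hfi.const_mul C).sub (hmom.const_mul k)
    have hBli : Integrable (fun x => B x * ℓ x) := by
      rw [hBleq]; exact (hBint.const_mul C).sub (hBmom_int.const_mul k)
    have hIfl : ∫ x, f x * ℓ x = C - k * M := by
      rw [hleq, integral_sub (hfi.const_mul C) (hmom.const_mul k),
        integral_const_mul, integral_const_mul, hmass, mul_one]
    have hIBl : ∫ x, B x * ℓ x = C - k * M := by
      rw [hBleq, integral_sub (hBint.const_mul C) (hBmom_int.const_mul k),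
        integral_const_mul, integral_const_mul, hBmass, mul_one, hBmom]
    have hfh : Integrable (fun x => f x * hfun x) := by
      apply Integrable.mono' (hfi.const_mul C)
        (hfi.aestronglyMeasurable.mul hhcont.aestronglyMeasurable)
      refine Eventually.of_forall fun x => ?_
      simp only [Pi.mul_apply]
      rw [Real.norm_of_nonneg (mul_nonneg (hnonneg x) (hhnn x)), mul_comm C (f x)]
      exact mul_le_mul_of_nonneg_left (hhleC x) (hnonneg x)
    have hv : Integrable (fun x => B x ^ p) := by
      apply Integrable.mono' (hBint.const_mul C)
      · have : (fun x => B x ^ p) = fun x => B x * hfun x := funext hBp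
        rw [this]
        exact hBint.aestronglyMeasurable.mul hhcont.aestronglyMeasurable
      · refine Eventually.of_forall fun x => ?_
        rw [hBp x, Real.norm_of_nonneg (mul_nonneg (hBnn x) (hhnn x)), mul_comm C (B x)]
        exact mul_le_mul_of_nonneg_left (hhleC x) (hBnn x)
    have hIBp : ∫ x, B x ^ p = C - k * M := by
      rw [integral_congr_ae (Eventually.of_forall fun x => (hBp x).trans (hBl x)), hIBl]
    -- positivity of ∫ B^p
    have hIpos : 0 < ∫ x, B x ^ p := by
      have hsupp : 0 < volume (Function.support B) := by
        apply (integral_pos_iff_support_of_nonneg_ae (Eventually.of_forall hBnn) hBint).1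
        rw [hBmass]; norm_num
      have hseq : Function.support (fun x => B x ^ p) = Function.support B := by
        ext x
        simp only [Function.mem_support]
        constructor
        · intro h h0
          exact h (by rw [h0, Real.zero_rpow hp0.ne'])
        · intro h
          have : 0 < B x := (hBnn x).lt_of_ne (Ne.symm h)
          exact (Real.rpow_pos_of_pos this p).ne'
      apply (integral_pos_iff_support_of_nonneg_ae
        (Eventually.of_forall fun x => Real.rpow_nonneg (hBnn x) p) hv).2
      rw [hseq]; exact hsupp
    -- Hölder
    have ht : (0:ℝ) < 1 - 1 / p := by
      rw [sub_pos, div_lt_one hp0]; exact hpgt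
    have hH := holder_aux (s := 1 / p) (t := 1 - 1 / p) (by positivity) ht (by ring)
      (fun x => Real.rpow_nonneg (hnonneg x) p)
      (fun x => Real.rpow_nonneg (hBnn x) p) hfp hv
    have hptw : ∀ x, (f x ^ p) ^ (1 / p) * (B x ^ p) ^ (1 - 1 / p) = f x * hfun x := by
      intro x
      have e1 : (f x ^ p) ^ (1 / p) = f x := by
        rw [← Real.rpow_mul (hnonneg x), mul_one_div, div_self hp0.ne', Real.rpow_one]
      have e2 : (B x ^ p) ^ (1 - 1 / p) = hfun x := by
        rw [← Real.rpow_mul (hBnn x), show p * (1 - 1 / p) = p - 1 by field_simp, hBpm]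
      rw [e1, e2]
    rw [integral_congr_ae (Eventually.of_forall hptw)] at hH
    -- chain of inequalities
    set I := ∫ x, B x ^ p with hIdef
    set J := ∫ x, f x ^ p with hJdef
    have hchain : I ≤ J ^ (1 / p) * I ^ (1 - 1 / p) := by
      calc I = ∫ x, f x * ℓ x := by rw [hIBp, hIfl]
        _ ≤ ∫ x, f x * hfun x := by
            apply integral_mono hfl hfh
            intro x
            exact mul_le_mul_of_nonneg_left (le_max_left _ _) (hnonneg x)
        _ ≤ J ^ (1 / p) * I ^ (1 - 1 / p) := hH
    have hsplit : I = I ^ (1 / p) * I ^ (1 - 1 / p) := by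
      rw [← Real.rpow_add hIpos, show 1 / p + (1 - 1 / p) = 1 by ring, Real.rpow_one]
    have h3 : I ^ (1 / p) ≤ J ^ (1 / p) := by
      have h3' : I ^ (1 / p) * I ^ (1 - 1 / p) ≤ J ^ (1 / p) * I ^ (1 - 1 / p) := by
        rw [← hsplit]; exact hchain
      exact le_of_mul_le_mul_right h3' (Real.rpow_pos_of_pos hIpos _)
    have hIJ : I ≤ J := by
      have h4 := Real.rpow_le_rpow (Real.rpow_nonneg hIpos.le _) h3 hp0.le
      rwa [← Real.rpow_mul hIpos.le, ← Real.rpow_mul hfp0.le, one_div,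
        inv_mul_cancel₀ hp0.ne', Real.rpow_one, Real.rpow_one] at h4
    unfold Rp
    rw [← mul_sub]
    rw [show 1 / (1 - p) * (Real.log I - Real.log J)
        = -(1 / (1 - p)) * -(Real.log I - Real.log J) by ring]
    apply mul_nonneg
    · rw [neg_nonneg]
      apply div_nonpos_of_nonneg_of_nonpos zero_le_one; linarith
    · rw [neg_nonneg]
      exact sub_nonpos.2 (Real.log_le_log hIpos hIJ)
end
end

section
/- Let n ≥ 1 and n/(n+2) < p < 1. Then every probability density f on ℝⁿ with bounded second moment satisfies F_p(f|B_{σ(f)}) ≤ (∫ B_{σ(f)}^p dx) · 𝔥_p(f), where B_{σ(f)} is the Barenblatt profile with the same second moment as f, F_p is the Newton–Ralston relative entropy, and 𝔥_p(f) = R_p(B_{σ(f)}) − R_p(f) is the relative Rényi entropy. -/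
open MeasureTheory Real Filter
open scoped Topology

noncomputable section

/-- The Newton–Ralston relative entropy
`F_p(f|B) = (1/(p-1)) ∫ [f^p − B^p − p B^{p-1}(f − B)]`. -/
def ralston (n : ℕ) (p : ℝ) (f B : EuclideanSpace ℝ (Fin n) → ℝ) : ℝ :=
  (1 / (p - 1)) * ∫ x, (f x ^ p - B x ^ p - p * B x ^ (p - 1) * (f x - B x))

/-- **Comparison of the Newton–Ralston and relative Rényi entropies, fast-diffusion case.**
Let `n ≥ 1` and `n/(n+2) < p < 1`.  Every probability density `f` on `ℝⁿ` with bounded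
second moment satisfies `F_p(f|B_{σ(f)}) ≤ (∫ B_{σ(f)}^p) · 𝔥_p(f)`, where `B_{σ(f)}` is
the Barenblatt profile with the same second moment as `f` and
`𝔥_p(f) = R_p(B_{σ(f)}) − R_p(f)`. -/
theorem ralston_le_relative_renyi_fast_diffusion
    (n : ℕ) (hn : 1 ≤ n) (p : ℝ) (hp : (n : ℝ) / (n + 2) < p) (hp1 : p < 1)
    (f : EuclideanSpace ℝ (Fin n) → ℝ)
    (hnonneg : ∀ x, 0 ≤ f x)
    (hfi : Integrable f) (hmass : (∫ x, f x) = 1)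
    (hmom : Integrable fun x => ‖x‖ ^ 2 * f x)
    (hfp : Integrable fun x => f x ^ p) (hfp0 : 0 < ∫ x, f x ^ p)
    (B : EuclideanSpace ℝ (Fin n) → ℝ)
    (hB : IsMatchedBarenblatt n p f B)
    (hBp : Integrable fun x => B x ^ p)
    (hmix : Integrable fun x => B x ^ (p - 1) * (f x - B x)) :
    ralston n p f B ≤ (∫ x, B x ^ p) * (Rp n p B - Rp n p f) := by
  obtain ⟨σ, C, hσ, hC, hBeq, hBmass, hBmom⟩ := hB
  have hp0 : 0 < p := lt_of_le_of_lt (by positivity) hp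
  have hp1' : (0:ℝ) < 1 - p := by linarith
  have hpne : p - 1 ≠ 0 := by linarith
  -- positivity of the base of the Barenblatt profile
  have hbase : ∀ x : EuclideanSpace ℝ (Fin n),
      0 < C + ((1 - p) / p) * ‖x‖ ^ 2 / (2 * σ) := by
    intro x
    have : 0 ≤ ((1 - p) / p) * ‖x‖ ^ 2 / (2 * σ) := by positivity
    linarith
  -- pointwise identity B^{p-1} = C + ((1-p)/p)‖x‖²/(2σ)
  have hkey : ∀ x, B x ^ (p - 1) = C + ((1 - p) / p) * ‖x‖ ^ 2 / (2 * σ) := by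
    intro x
    rw [hBeq]
    simp only [barenblatt, if_pos hp1]
    rw [← Real.rpow_mul (hbase x).le, one_div_mul_cancel hpne, Real.rpow_one]
  -- positivity of B
  have hBpos : ∀ x, 0 < B x := by
    intro x
    rw [hBeq]
    simp only [barenblatt, if_pos hp1]
    exact Real.rpow_pos_of_pos (hbase x) _
  -- B is integrable (otherwise its integral would be 0, not 1)
  have hBint : Integrable B := by
    by_contra h
    rw [integral_undef h] at hBmass
    norm_num at hBmass
  set k : ℝ := (1 - p) / p / (2 * σ) with hk
  have hkpos : 0 < k := by positivity
  -- decomposition of the mixed integrand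
  have hdecomp : (fun x => B x ^ (p - 1) * (f x - B x))
      = fun x => C * (f x - B x) + k * (‖x‖ ^ 2 * (f x - B x)) := by
    funext x
    rw [hkey x, hk]
    ring
  have h1 : Integrable (fun x => C * (f x - B x)) := (hfi.sub hBint).const_mul C
  have h2 : Integrable (fun x => k * (‖x‖ ^ 2 * (f x - B x))) := by
    have h := hmix
    rw [hdecomp] at h
    have h' := h.sub h1
    have heq : ((fun x => C * (f x - B x) + k * (‖x‖ ^ 2 * (f x - B x)))
        - fun x => C * (f x - B x))
        = fun x : EuclideanSpace ℝ (Fin n) => k * (‖x‖ ^ 2 * (f x - B x)) := by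
      funext x
      simp only [Pi.sub_apply]
      ring
    rwa [heq] at h'
  have h3 : Integrable (fun x => ‖x‖ ^ 2 * (f x - B x)) := by
    have := h2.const_mul k⁻¹
    simpa [← mul_assoc, inv_mul_cancel₀ hkpos.ne'] using this
  have hBmom_int : Integrable (fun x => ‖x‖ ^ 2 * B x) := by
    have : (fun x : EuclideanSpace ℝ (Fin n) => ‖x‖ ^ 2 * B x)
        = fun x => ‖x‖ ^ 2 * f x - ‖x‖ ^ 2 * (f x - B x) := by
      funext x; ring
    rw [this]
    exact hmom.sub h3
  -- the mixed integral vanishes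
  have hmix0 : (∫ x, B x ^ (p - 1) * (f x - B x)) = 0 := by
    rw [hdecomp, integral_add h1 h2]
    have e1 : (∫ x, C * (f x - B x)) = 0 := by
      rw [integral_const_mul, integral_sub hfi hBint, hmass, hBmass]
      ring
    have e2 : (∫ x, k * (‖x‖ ^ 2 * (f x - B x))) = 0 := by
      rw [integral_const_mul]
      have : (fun x : EuclideanSpace ℝ (Fin n) => ‖x‖ ^ 2 * (f x - B x))
          = fun x => ‖x‖ ^ 2 * f x - ‖x‖ ^ 2 * B x := by
        funext x; ring
      rw [this, integral_sub hmom hBmom_int, hBmom]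
      ring
    rw [e1, e2]; ring
  set a : ℝ := ∫ x, f x ^ p with ha
  set b : ℝ := ∫ x, B x ^ p with hbdef
  have hbpos : 0 < b := by
    rw [hbdef]
    rw [integral_pos_iff_support_of_nonneg
      (fun x => (Real.rpow_pos_of_pos (hBpos x) p).le) hBp]
    have hsupp : Function.support (fun x : EuclideanSpace ℝ (Fin n) => B x ^ p)
        = Set.univ := by
      ext x
      simp [Function.support, (Real.rpow_pos_of_pos (hBpos x) p).ne']
    rw [hsupp]
    exact isOpen_univ.measure_pos volume ⟨0, trivial⟩
  -- compute the ralston entropy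
  have hral : ralston n p f B = (1 / (p - 1)) * (a - b) := by
    rw [ralston]
    congr 1
    have hint : (fun x => f x ^ p - B x ^ p - p * B x ^ (p - 1) * (f x - B x))
        = fun x => (f x ^ p - B x ^ p) - p * (B x ^ (p - 1) * (f x - B x)) := by
      funext x; ring
    have hsub : Integrable (fun x => f x ^ p - B x ^ p) := hfp.sub hBp
    have hpm : Integrable (fun x => p * (B x ^ (p - 1) * (f x - B x))) :=
      hmix.const_mul p
    rw [hint, integral_sub hsub hpm, integral_sub hfp hBp, integral_const_mul, hmix0]
    ring
  rw [hral, Rp, Rp, ← ha, ← hbdef]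
  -- final scalar inequality
  have hlog : Real.log (a / b) ≤ a / b - 1 :=
    Real.log_le_sub_one_of_pos (by positivity)
  rw [Real.log_div hfp0.ne' hbpos.ne'] at hlog
  have key : (1 / (p - 1)) * (a - b) = (1 / (1 - p)) * (b - a) := by
    field_simp
    ring
  rw [key]
  have hdiv : a / b - 1 = (a - b) / b := by field_simp
  rw [hdiv] at hlog
  have hbmul : b * (Real.log a - Real.log b) ≤ a - b := by
    have := mul_le_mul_of_nonneg_left hlog hbpos.le
    rwa [mul_div_cancel₀ _ hbpos.ne'] at this
  have : b - a ≤ b * (Real.log b - Real.log a) := by nlinarith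
  calc (1 / (1 - p)) * (b - a) ≤ (1 / (1 - p)) * (b * (Real.log b - Real.log a)) := by
        apply mul_le_mul_of_nonneg_left this (by positivity)
    _ = b * (1 / (1 - p) * Real.log b - 1 / (1 - p) * Real.log a) := by ring
end
end

section
/- Let n ≥ 1 and p > 1. Then every probability density f on ℝⁿ with bounded second moment and ∫ f^p dx < ∞ satisfies F_p(f|B_{σ(f)}) ≤ (∫ f^p dx) · 𝔥_p(f), where B_{σ(f)} is the Barenblatt profile with the same second moment as f, F_p is the Newton–Ralston relative entropy, and 𝔥_p(f) = R_p(B_{σ(f)}) − R_p(f) is the relative Rényi entropy. -/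
open MeasureTheory Real Filter
open scoped Topology

noncomputable section

/-- **Comparison of the Newton–Ralston and relative Rényi entropies, porous-medium case.**
Let `n ≥ 1` and `p > 1`.  Every probability density `f` on `ℝⁿ` with bounded second
moment and `∫ f^p < ∞` satisfies `F_p(f|B_{σ(f)}) ≤ (∫ f^p) · 𝔥_p(f)`, where `B_{σ(f)}`
is the Barenblatt profile with the same second moment as `f` and
`𝔥_p(f) = R_p(B_{σ(f)}) − R_p(f)`. -/
theorem ralston_le_relative_renyi_porous_medium
    (n : ℕ) (hn : 1 ≤ n) (p : ℝ) (hp1 : 1 < p)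
    (f : EuclideanSpace ℝ (Fin n) → ℝ)
    (hnonneg : ∀ x, 0 ≤ f x)
    (hfi : Integrable f) (hmass : (∫ x, f x) = 1)
    (hmom : Integrable fun x => ‖x‖ ^ 2 * f x)
    (hfp : Integrable fun x => f x ^ p) (hfp0 : 0 < ∫ x, f x ^ p)
    (B : EuclideanSpace ℝ (Fin n) → ℝ)
    (hB : IsMatchedBarenblatt n p f B)
    (hBp : Integrable fun x => B x ^ p)
    (hmix : Integrable fun x => B x ^ (p - 1) * (f x - B x)) :
    ralston n p f B ≤ (∫ x, f x ^ p) * (Rp n p B - Rp n p f) := by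
  classical
  obtain ⟨σ, C, hσ, hC, hBdef, hBmass, hBmom⟩ := hB
  have hp0 : (0:ℝ) < p := lt_trans one_pos hp1
  have hpm : (0:ℝ) < p - 1 := sub_pos.mpr hp1
  have he : (0:ℝ) < 1 / (p - 1) := by positivity
  set g : EuclideanSpace ℝ (Fin n) → ℝ :=
    fun x => C - ((p - 1) / p) * ‖x‖ ^ 2 / (2 * σ) with hg
  have hBx : ∀ x, B x = (max (g x) 0) ^ (1 / (p - 1)) := by
    intro x
    rw [hBdef]
    simp only [barenblatt, if_neg (not_lt.mpr hp1.le), hg]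
  have hBnn : ∀ x, 0 ≤ B x := fun x => by
    rw [hBx]; positivity
  have hBpow : ∀ x, B x ^ (p - 1) = max (g x) 0 := by
    intro x
    rw [hBx, ← Real.rpow_mul (le_max_right (g x) 0), one_div_mul_cancel hpm.ne',
      Real.rpow_one]
  -- continuity and compact support of B
  have hgc : Continuous g := by
    apply Continuous.sub continuous_const
    exact (continuous_const.mul (continuous_norm.pow 2)).div_const _
  have hBc : Continuous B := by
    have hBfun : B = fun x => (max (g x) 0) ^ (1 / (p - 1)) := funext hBx
    rw [hBfun]
    exact (hgc.max continuous_const).rpow_const fun x => Or.inr he.le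
  set R : ℝ := Real.sqrt (C * (2 * σ) * (p / (p - 1))) with hR
  have hRsq : R ^ 2 = C * (2 * σ) * (p / (p - 1)) := by
    rw [hR, Real.sq_sqrt (by positivity)]
  have hBzero : ∀ x : EuclideanSpace ℝ (Fin n), R < ‖x‖ → B x = 0 := by
    intro x hx
    have hx2 : C * (2 * σ) * (p / (p - 1)) < ‖x‖ ^ 2 := by
      rw [← hRsq]
      have hR0 : 0 ≤ R := Real.sqrt_nonneg _
      nlinarith
    have hglt : g x < 0 := by
      have heq : (p - 1) / p * (C * (2 * σ) * (p / (p - 1))) / (2 * σ) = C := by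
        field_simp
      have hlt : (p - 1) / p * (C * (2 * σ) * (p / (p - 1))) / (2 * σ)
          < (p - 1) / p * ‖x‖ ^ 2 / (2 * σ) := by
        gcongr <;> positivity
      rw [heq] at hlt
      simp only [hg]
      linarith
    rw [hBx, max_eq_right hglt.le, Real.zero_rpow (one_div_ne_zero hpm.ne')]
  have hsupp : HasCompactSupport B := by
    apply HasCompactSupport.intro (isCompact_closedBall (0 : EuclideanSpace ℝ (Fin n)) R)
    intro x hx
    apply hBzero
    simpa [Metric.mem_closedBall, dist_zero_right] using hx
  have hBint : Integrable B := hBc.integrable_of_hasCompactSupport hsupp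
  have hBmomint : Integrable (fun x : EuclideanSpace ℝ (Fin n) => ‖x‖ ^ 2 * B x) := by
    apply Continuous.integrable_of_hasCompactSupport
    · exact (continuous_norm.pow 2).mul hBc
    · exact hsupp.mul_left
  -- positivity of ∫ B^p
  have hb0 : 0 < ∫ x, B x ^ p := by
    rcases lt_or_eq_of_le (integral_nonneg (f := fun x => B x ^ p) fun x => Real.rpow_nonneg (hBnn x) p) with h | h
    · exact h
    · exfalso
      have hae : (fun x => B x ^ p) =ᵐ[volume] 0 :=
        (integral_eq_zero_iff_of_nonneg (f := fun x => B x ^ p) (fun x => Real.rpow_nonneg (hBnn x) p) hBp).mp h.symm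
      have hae2 : B =ᵐ[volume] 0 := by
        filter_upwards [hae] with x hx
        exact (Real.rpow_eq_zero (hBnn x) hp0.ne').mp hx
      have : (∫ x, B x) = 0 := by
        rw [integral_congr_ae hae2]
        simp
      rw [hBmass] at this
      norm_num at this
  -- nonnegativity of the mixed term
  have hpt : ∀ x, g x * (f x - B x) ≤ B x ^ (p - 1) * (f x - B x) := by
    intro x
    rw [hBpow x]
    rcases le_or_gt 0 (g x) with h | h
    · rw [max_eq_left h]
    · have hB0 : B x = 0 := by
        rw [hBx, max_eq_right h.le, Real.zero_rpow (one_div_ne_zero hpm.ne')]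
      rw [max_eq_right h.le, hB0, zero_mul, sub_zero]
      exact mul_nonpos_iff.mpr (Or.inr ⟨h.le, hnonneg x⟩)
  set k : ℝ := (p - 1) / p / (2 * σ) with hk
  have hdecomp : (fun x => g x * (f x - B x)) = fun x =>
      (C * f x - C * B x) - k * (‖x‖ ^ 2 * f x) + k * (‖x‖ ^ 2 * B x) := by
    funext x
    simp only [hg, hk]
    ring
  have h1 : Integrable (fun x => C * f x) := hfi.const_mul C
  have h2 : Integrable (fun x => C * B x) := hBint.const_mul C
  have h12 : Integrable (fun x => C * f x - C * B x) := h1.sub h2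
  have h3 : Integrable (fun x => k * (‖x‖ ^ 2 * f x)) := hmom.const_mul k
  have h123 : Integrable (fun x => C * f x - C * B x - k * (‖x‖ ^ 2 * f x)) := h12.sub h3
  have h4 : Integrable (fun x => k * (‖x‖ ^ 2 * B x)) := hBmomint.const_mul k
  have hgfint : Integrable (fun x => g x * (f x - B x)) := by
    rw [hdecomp]
    exact h123.add h4
  have hint0 : (∫ x, g x * (f x - B x)) = 0 := by
    rw [hdecomp, integral_add h123 h4, integral_sub h12 h3, integral_sub h1 h2,
      integral_const_mul, integral_const_mul, integral_const_mul, integral_const_mul,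
      hmass, hBmass, hBmom]
    ring
  have hM : 0 ≤ ∫ x, B x ^ (p - 1) * (f x - B x) := by
    rw [← hint0]
    exact integral_mono hgfint hmix hpt
  -- main inequality
  set a : ℝ := ∫ x, f x ^ p with ha
  set b : ℝ := ∫ x, B x ^ p with hb
  set M : ℝ := ∫ x, B x ^ (p - 1) * (f x - B x) with hMdef
  have hsplit : (∫ x, (f x ^ p - B x ^ p - p * B x ^ (p - 1) * (f x - B x)))
      = a - b - p * M := by
    have hrw : (fun x => f x ^ p - B x ^ p - p * B x ^ (p - 1) * (f x - B x))
        = fun x => (f x ^ p - B x ^ p) - p * (B x ^ (p - 1) * (f x - B x)) :=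
      funext fun x => by ring
    have h5 : Integrable (fun x => f x ^ p - B x ^ p) := hfp.sub hBp
    have h6 : Integrable (fun x => p * (B x ^ (p - 1) * (f x - B x))) := hmix.const_mul p
    rw [hrw, integral_sub h5 h6, integral_sub hfp hBp, integral_const_mul]
  have hlog : Real.log (b / a) ≤ b / a - 1 :=
    Real.log_le_sub_one_of_pos (div_pos hb0 hfp0)
  have hld : Real.log (b / a) = Real.log b - Real.log a := Real.log_div hb0.ne' hfp0.ne'
  have key : a - b ≤ a * (Real.log a - Real.log b) := by
    rw [hld] at hlog
    have h3 : 1 - b / a ≤ Real.log a - Real.log b := by linarith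
    have h4 : a * (1 - b / a) ≤ a * (Real.log a - Real.log b) :=
      mul_le_mul_of_nonneg_left h3 hfp0.le
    have h5 : a * (1 - b / a) = a - b := by field_simp
    linarith
  have hpM : 0 ≤ p * M := mul_nonneg hp0.le hM
  have hfin : a - b - p * M ≤ a * (Real.log a - Real.log b) := by linarith
  have hmul : (1 / (p - 1)) * (a - b - p * M)
      ≤ (1 / (p - 1)) * (a * (Real.log a - Real.log b)) :=
    mul_le_mul_of_nonneg_left hfin he.le
  have hRHS : a * ((1 / (1 - p)) * Real.log b - (1 / (1 - p)) * Real.log a)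
      = (1 / (p - 1)) * (a * (Real.log a - Real.log b)) := by
    have h1 : (1:ℝ) / (1 - p) = -(1 / (p - 1)) := by
      rw [show (1:ℝ) - p = -(p - 1) by ring, ← neg_div, div_neg, neg_div]
    rw [h1]
    ring
  simp only [ralston, Rp]
  rw [hsplit, ← ha, ← hb, hRHS]
  exact hmul
end
end

section
/- Let p > 0, p ≠ 1, and let f and g be probability densities on ℝⁿ such that all the integrals ∫ f^p dx, ∫ g^p dx and ∫ g^{p−1} f dx are finite and positive. Then the relative Rényi entropy of order p is nonnegative: H_p(f|g) = (1/(p−1)) log ∫ f^p dx + log ∫ g^p dx − (p/(p−1)) log ∫ g^{p−1} f dx ≥ 0. -/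
open MeasureTheory Real Filter
open scoped Topology

noncomputable section

lemma memLp_of_integrable_rpow_aux {α : Type*} [MeasurableSpace α] {μ : Measure α} {p : ℝ}
    (hp : 0 < p) {f : α → ℝ} (hf : ∀ x, 0 ≤ f x) (hm : AEStronglyMeasurable f μ)
    (hi : Integrable (fun x => f x ^ p) μ) : MemLp f (ENNReal.ofReal p) μ := by
  have hq0 : ENNReal.ofReal p ≠ 0 := by simp [ENNReal.ofReal_eq_zero, not_le, hp]
  have hqt : ENNReal.ofReal p ≠ ⊤ := ENNReal.ofReal_ne_top
  refine (memLp_norm_rpow_iff (p := ENNReal.ofReal p) (q := ENNReal.ofReal p) hm hq0 hqt).1 ?_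
  rw [ENNReal.div_self hq0 hqt, memLp_one_iff_integrable]
  refine hi.congr (Eventually.of_forall fun x => ?_)
  simp only
  rw [Real.norm_of_nonneg (hf x), ENNReal.toReal_ofReal hp.le]

/-- **Nonnegativity of the relative Rényi entropy of order `p`.**
Let `p > 0`, `p ≠ 1`, and let `f`, `g` be probability densities on `ℝⁿ` such that the
integrals `∫ f^p`, `∫ g^p` and `∫ g^{p-1} f` are finite and positive (in particular
`f` vanishes a.e. where `g` vanishes, so that `∫ g^{p-1} f` is genuinely finite).
Then `H_p(f|g) = (1/(p-1)) log ∫ f^p + log ∫ g^p − (p/(p-1)) log ∫ g^{p-1} f ≥ 0`. -/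
theorem relative_renyi_entropy_of_order_p_nonneg
    (n : ℕ) (p : ℝ) (hp : 0 < p) (hp1 : p ≠ 1)
    (f g : EuclideanSpace ℝ (Fin n) → ℝ)
    (hf : ∀ x, 0 ≤ f x) (hg : ∀ x, 0 ≤ g x)
    (hfi : Integrable f) (hfm : (∫ x, f x) = 1)
    (hgi : Integrable g) (hgm : (∫ x, g x) = 1)
    (hfp : Integrable fun x => f x ^ p) (hfp0 : 0 < ∫ x, f x ^ p)
    (hgp : Integrable fun x => g x ^ p) (hgp0 : 0 < ∫ x, g x ^ p)
    (hgf : Integrable fun x => g x ^ (p - 1) * f x)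
    (hgf0 : 0 < ∫ x, g x ^ (p - 1) * f x)
    (hac : ∀ᵐ x, g x = 0 → f x = 0) :
    0 ≤ (1 / (p - 1)) * Real.log (∫ x, f x ^ p) + Real.log (∫ x, g x ^ p) -
        (p / (p - 1)) * Real.log (∫ x, g x ^ (p - 1) * f x) := by
  set F := ∫ x, f x ^ p with hF
  set B := ∫ x, g x ^ p with hB
  set A := ∫ x, g x ^ (p - 1) * f x with hA
  have hfm' : AEStronglyMeasurable f (volume : Measure (EuclideanSpace ℝ (Fin n))) :=
    hfi.aestronglyMeasurable
  have hgm' : AEStronglyMeasurable g (volume : Measure (EuclideanSpace ℝ (Fin n))) :=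
    hgi.aestronglyMeasurable
  rcases lt_or_gt_of_ne hp1 with hlt | hgt
  · -- case p < 1
    have h1p : (0:ℝ) < 1 - p := by linarith
    set φ : EuclideanSpace ℝ (Fin n) → ℝ := fun x => g x ^ (p - 1) * f x with hφ
    have hφ0 : ∀ x, 0 ≤ φ x := fun x => mul_nonneg (Real.rpow_nonneg (hg x) _) (hf x)
    set a : EuclideanSpace ℝ (Fin n) → ℝ := fun x => φ x ^ p with ha
    set b : EuclideanSpace ℝ (Fin n) → ℝ := fun x => (g x ^ p) ^ (1 - p) with hb
    have hpq : (1/p).HolderConjugate (1/(1-p)) := by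
      refine Real.holderConjugate_iff.mpr ⟨?_, ?_⟩
      · rw [lt_div_iff₀ hp]; linarith
      · rw [one_div, one_div, inv_inv, inv_inv]; ring
    have hma : MemLp a (ENNReal.ofReal (1/p)) := by
      refine memLp_of_integrable_rpow_aux (by positivity) (fun x => Real.rpow_nonneg (hφ0 x) _)
        ((hgf.aestronglyMeasurable.aemeasurable.pow_const p).aestronglyMeasurable) ?_
      refine hgf.congr (Eventually.of_forall fun x => ?_)
      simp only [ha, ← Real.rpow_natCast]
      rw [← Real.rpow_mul (hφ0 x), mul_one_div, div_self hp.ne', Real.rpow_one]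
    have hmb : MemLp b (ENNReal.ofReal (1/(1-p))) := by
      refine memLp_of_integrable_rpow_aux (by positivity)
        (fun x => Real.rpow_nonneg (Real.rpow_nonneg (hg x) _) _)
        ((hgp.aestronglyMeasurable.aemeasurable.pow_const (1-p)).aestronglyMeasurable) ?_
      refine hgp.congr (Eventually.of_forall fun x => ?_)
      simp only [hb]
      rw [← Real.rpow_mul (Real.rpow_nonneg (hg x) _), mul_one_div, div_self h1p.ne',
        Real.rpow_one]
    have holder := integral_mul_le_Lp_mul_Lq_of_nonneg hpq
      (Eventually.of_forall fun x => Real.rpow_nonneg (hφ0 x) _)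
      (Eventually.of_forall fun x => Real.rpow_nonneg (Real.rpow_nonneg (hg x) _) _) hma hmb
    -- ∫ a * b = F a.e.
    have hab : (∫ x, a x * b x) = F := by
      rw [hF]
      refine integral_congr_ae ?_
      filter_upwards [hac] with x hx
      rcases eq_or_lt_of_le (hg x) with hgx | hgx
      · have hfx : f x = 0 := hx hgx.symm
        simp only [ha, hb, hφ, hfx, ← hgx, mul_zero, Real.zero_rpow hp.ne',
          Real.zero_rpow h1p.ne', zero_mul]
      · have hgp' : (0:ℝ) < g x ^ (p-1) := Real.rpow_pos_of_pos hgx _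
        simp only [ha, hb, hφ]
        rw [Real.mul_rpow hgp'.le (hf x), ← Real.rpow_mul (hg x),
          ← Real.rpow_mul (hg x)]
        rw [mul_comm (g x ^ ((p-1)*p)) (f x ^ p), mul_assoc, ← Real.rpow_add hgx]
        have : (p-1)*p + p*(1-p) = 0 := by ring
        rw [this, Real.rpow_zero, mul_one]
    -- ∫ a ^ (1/p) = A
    have haA : (∫ x, a x ^ (1/p)) = A := by
      rw [hA]
      refine integral_congr_ae (Eventually.of_forall fun x => ?_)
      simp only [ha]
      rw [← Real.rpow_mul (hφ0 x), mul_one_div, div_self hp.ne', Real.rpow_one]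
    have hbB : (∫ x, b x ^ (1/(1-p))) = B := by
      rw [hB]
      refine integral_congr_ae (Eventually.of_forall fun x => ?_)
      simp only [hb]
      rw [← Real.rpow_mul (Real.rpow_nonneg (hg x) _), mul_one_div, div_self h1p.ne',
        Real.rpow_one]
    rw [hab, haA, hbB] at holder
    have h1d : (1:ℝ) / (1/p) = p := by field_simp
    have h2d : (1:ℝ) / (1/(1-p)) = 1-p := by field_simp
    rw [h1d, h2d] at holder
    -- F ≤ A^p * B^(1-p); take logs
    have hAp : (0:ℝ) < A ^ p := Real.rpow_pos_of_pos hgf0 _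
    have hBp : (0:ℝ) < B ^ (1-p) := Real.rpow_pos_of_pos hgp0 _
    have hlog : Real.log F ≤ p * Real.log A + (1-p) * Real.log B := by
      calc Real.log F ≤ Real.log (A ^ p * B ^ (1-p)) := Real.log_le_log hfp0 holder
        _ = p * Real.log A + (1-p) * Real.log B := by
            rw [Real.log_mul hAp.ne' hBp.ne', Real.log_rpow hgf0, Real.log_rpow hgp0]
    have hneg : p - 1 < 0 := by linarith
    have key : (1/(p-1)) * (p * Real.log A + (1-p) * Real.log B) ≤ (1/(p-1)) * Real.log F := by
      apply mul_le_mul_of_nonpos_left hlog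
      rw [one_div]
      exact (inv_nonpos.2 hneg.le)
    have hne1 : p - 1 ≠ 0 := hneg.ne
    have hexp : (1/(p-1)) * (p * Real.log A + (1-p) * Real.log B)
        = (p/(p-1)) * Real.log A - Real.log B := by
      field_simp
      ring
    linarith [hexp ▸ key]
  · -- case p > 1
    have hne : p ≠ 0 := hp.ne'
    have hne1 : p - 1 ≠ 0 := by linarith
    have hq : (p/(p-1)).HolderConjugate p := by
      refine Real.holderConjugate_iff.mpr ⟨?_, ?_⟩
      · rw [lt_div_iff₀ (by linarith : (0:ℝ) < p - 1)]; linarith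
      · field_simp
        ring
    have hm1 : MemLp (fun x => g x ^ (p-1)) (ENNReal.ofReal (p/(p-1))) := by
      refine memLp_of_integrable_rpow_aux (div_pos hp (by linarith))
        (fun x => Real.rpow_nonneg (hg x) _)
        ((hgm'.aemeasurable.pow_const (p-1)).aestronglyMeasurable) ?_
      refine hgp.congr (Eventually.of_forall fun x => ?_)
      simp only
      rw [← Real.rpow_mul (hg x)]
      congr 1
      field_simp
    have hm2 : MemLp f (ENNReal.ofReal p) :=
      memLp_of_integrable_rpow_aux hp hf hfm' hfp
    have holder := integral_mul_le_Lp_mul_Lq_of_nonneg hq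
      (Eventually.of_forall fun x => Real.rpow_nonneg (hg x) _)
      (Eventually.of_forall hf) hm1 hm2
    have hgq : (∫ x, (g x ^ (p-1)) ^ (p/(p-1))) = B := by
      rw [hB]
      refine integral_congr_ae (Eventually.of_forall fun x => ?_)
      simp only
      rw [← Real.rpow_mul (hg x)]
      congr 1
      field_simp
    rw [hgq] at holder
    have hBq : (0:ℝ) < B ^ (1/(p/(p-1))) := Real.rpow_pos_of_pos hgp0 _
    have hFq : (0:ℝ) < F ^ (1/p) := Real.rpow_pos_of_pos hfp0 _
    have hlog : Real.log A ≤ ((p-1)/p) * Real.log B + (1/p) * Real.log F := by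
      calc Real.log A ≤ Real.log (B ^ (1/(p/(p-1))) * F ^ (1/p)) :=
            Real.log_le_log hgf0 holder
        _ = ((p-1)/p) * Real.log B + (1/p) * Real.log F := by
            rw [Real.log_mul hBq.ne' hFq.ne', Real.log_rpow hgp0, Real.log_rpow hfp0]
            congr 2
            field_simp
    have hpos : (0:ℝ) < p/(p-1) := div_pos hp (by linarith)
    have key := mul_le_mul_of_nonneg_left hlog hpos.le
    have hexp : (p/(p-1)) * (((p-1)/p) * Real.log B + (1/p) * Real.log F)
        = Real.log B + (1/(p-1)) * Real.log F := by
      field_simp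
    linarith [hexp ▸ key]
end
end

section
/- Let n ≥ 1 and p > n/(n+2), p ≠ 1. Let v be a smooth probability density on ℝⁿ with finite positive second moment E(v), finite ∫ v^p dx > 0, and finite generalized Fisher information. If equality holds in the inequality I_p(v) ≥ n² (∫ v^p dx)/E(v), i.e. on the set {v > 0} one has ∇(v^p)(x)/v(x) + n x (∫ v^p dx)/E(v) = 0, then v is a Barenblatt density: v^{p−1}(x) + ((p−1)/(2p)) |x|² · n(∫ v^p dx)/E(v) is constant on {v > 0}. -/
open MeasureTheory Real Filter
open scoped Topology

noncomputable section

section Aux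

variable {E : Type*} [NormedAddCommGroup E] [NormedSpace ℝ E]

private lemma aux_const_of_convex {s : Set E} (hs : Convex ℝ s) {g : E → ℝ}
    (hg : ∀ x ∈ s, HasFDerivAt g (0 : E →L[ℝ] ℝ) x) {a b : E} (ha : a ∈ s) (hb : b ∈ s) : g a = g b := by
  have h := hs.norm_image_sub_le_of_norm_hasFDerivWithin_le
    (f' := fun _ : E => (0 : E →L[ℝ] ℝ)) (C := 0)
    (fun x hx => (hg x hx).hasFDerivWithinAt) (fun x hx => by simp) hb ha
  have h' : ‖g a - g b‖ ≤ 0 := by simpa using h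
  have := norm_le_zero_iff.mp h'
  linarith [sub_eq_zero.mp this]

private lemma aux_const_on_preconnected {U W : Set E} (hUo : IsOpen U) {g : E → ℝ}
    (hg : ∀ x ∈ U, HasFDerivAt g (0 : E →L[ℝ] ℝ) x) (hWo : IsOpen W) (hWc : IsPreconnected W)
    (hWU : W ⊆ U) {a b : E} (ha : a ∈ W) (hb : b ∈ W) : g a = g b := by
  have hloc : ∀ x ∈ W, ∃ ε > 0, Metric.ball x ε ⊆ W ∧ ∀ y ∈ Metric.ball x ε, g y = g x := by
    intro x hx
    obtain ⟨ε₁, hε₁, hb₁⟩ := Metric.isOpen_iff.mp hWo x hx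
    refine ⟨ε₁, hε₁, hb₁, fun y hy => ?_⟩
    exact aux_const_of_convex (convex_ball x ε₁)
      (fun z hz => hg z (hWU (hb₁ hz))) hy (Metric.mem_ball_self hε₁)
  by_contra hne
  have hou : IsOpen {y | y ∈ W ∧ g y = g a} := by
    rw [Metric.isOpen_iff]
    rintro y ⟨hyW, hyg⟩
    obtain ⟨ε, hε, hbW, hconst⟩ := hloc y hyW
    exact ⟨ε, hε, fun z hz => ⟨hbW hz, (hconst z hz).trans hyg⟩⟩
  have how : IsOpen {y | y ∈ W ∧ g y ≠ g a} := by
    rw [Metric.isOpen_iff]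
    rintro y ⟨hyW, hyg⟩
    obtain ⟨ε, hε, hbW, hconst⟩ := hloc y hyW
    exact ⟨ε, hε, fun z hz => ⟨hbW hz, fun h => hyg ((hconst z hz).symm.trans h)⟩⟩
  obtain ⟨z, hzW, ⟨⟨-, hz1⟩, ⟨-, hz2⟩⟩⟩ :=
    hWc _ _ hou how
      (fun y hy => (em (g y = g a)).imp (fun h => ⟨hy, h⟩) (fun h => ⟨hy, h⟩))
      ⟨a, ha, ha, rfl⟩ ⟨b, hb, hb, fun h => hne h.symm⟩
  exact hz2 hz1

private lemma aux_mem_component_of_closure [LocallyConnectedSpace E] {U : Set E}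
    (hUo : IsOpen U) {x z : E}
    (hz : z ∈ closure (connectedComponentIn U x)) (hzU : z ∈ U) :
    z ∈ connectedComponentIn U x := by
  have h0 : z ∈ connectedComponentIn U z := mem_connectedComponentIn hzU
  obtain ⟨y, hy₁, hy₂⟩ := mem_closure_iff_nhds.mp hz _
    ((hUo.connectedComponentIn).mem_nhds h0)
  rw [connectedComponentIn_eq hy₂, ← connectedComponentIn_eq hy₁]
  exact h0

private lemma aux_subset_of_closure {W B : Set E} (hWo : IsOpen W) (hB : IsPreconnected B)
    (hcl : ∀ z ∈ closure W, z ∈ B → z ∈ W) (hne : (B ∩ W).Nonempty) : B ⊆ W := by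
  intro z hz
  by_contra hzW
  obtain ⟨w, -, hw1, hw2⟩ := hB W (closure W)ᶜ hWo isClosed_closure.isOpen_compl
    (fun y hy => (em (y ∈ closure W)).imp (fun h => hcl y h hy) id)
    hne ⟨z, hz, fun h => hzW (hcl z h hz)⟩
  exact hw2 (subset_closure hw1)

end Aux

/-- **Equality case: only Barenblatt densities saturate the Fisher information bound.**
Let `n ≥ 1` and `p > n/(n+2)`, `p ≠ 1`, and let `v` be a smooth probability density on
`ℝⁿ` with finite positive second moment `E(v)`, finite `∫ v^p > 0` and finite generalized
Fisher information.  If on the set `{v > 0}` one has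
`∇(v^p)(x)/v(x) + n x (∫ v^p)/E(v) = 0`, then `v` is a Barenblatt density:
`v^{p-1}(x) + ((p-1)/(2p)) |x|² · n (∫ v^p)/E(v)` is constant on `{v > 0}`. -/
theorem fisherp_equality_case_barenblatt
    (n : ℕ) (hn : 1 ≤ n) (p : ℝ) (hp : (n : ℝ) / (n + 2) < p) (hp1 : p ≠ 1)
    (v : EuclideanSpace ℝ (Fin n) → ℝ)
    (hsmooth : ContDiff ℝ (⊤ : ℕ∞) v)
    (hnonneg : ∀ x, 0 ≤ v x)
    (hvi : Integrable v) (hmass : (∫ x, v x) = 1)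
    (hmom : Integrable fun x => ‖x‖ ^ 2 * v x) (hmompos : 0 < ∫ x, ‖x‖ ^ 2 * v x)
    (hvp : Integrable fun x => v x ^ p) (hvp0 : 0 < ∫ x, v x ^ p)
    (hfish : IntegrableOn (fun x => ‖gradient (fun y => v y ^ p) x‖ ^ 2 / v x)
      {x | 0 < v x})
    (heq : ∀ x, 0 < v x →
      (v x)⁻¹ • gradient (fun y => v y ^ p) x +
        ((n : ℝ) * (∫ y, v y ^ p) / (∫ y, ‖y‖ ^ 2 * v y)) • x = 0) :
    ∃ c : ℝ, ∀ x, 0 < v x →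
      v x ^ (p - 1) +
        ((p - 1) / (2 * p)) * ‖x‖ ^ 2 *
          ((n : ℝ) * (∫ y, v y ^ p) / (∫ y, ‖y‖ ^ 2 * v y)) = c := by
  classical
  have hn1 : (1 : ℝ) ≤ (n : ℝ) := by exact_mod_cast hn
  have hp0 : 0 < p := lt_of_le_of_lt (by positivity) hp
  set K : ℝ := (n : ℝ) * (∫ y, v y ^ p) / (∫ y, ‖y‖ ^ 2 * v y) with hKdef
  have hK : 0 < K := div_pos (mul_pos (by linarith) hvp0) hmompos
  set b : ℝ := (p - 1) / (2 * p) * K with hbdef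
  set U : Set (EuclideanSpace ℝ (Fin n)) := {x | 0 < v x} with hUdef
  have hUo : IsOpen U := isOpen_lt continuous_const hsmooth.continuous
  set g : EuclideanSpace ℝ (Fin n) → ℝ := fun y => v y ^ (p - 1) + b * ‖y‖ ^ 2 with hgdef
  have hdv : ∀ x, HasFDerivAt v (fderiv ℝ v x) x := fun x =>
    (hsmooth.differentiable (by simp) x).hasFDerivAt
  -- the key derivative computation
  have key : ∀ x ∈ U, HasFDerivAt g (0 : EuclideanSpace ℝ (Fin n) →L[ℝ] ℝ) x := by
    intro x hx
    have hvx : 0 < v x := hx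
    set G : EuclideanSpace ℝ (Fin n) :=
      (InnerProductSpace.toDual ℝ _).symm (fderiv ℝ v x) with hGdef
    have hfd : fderiv ℝ v x = InnerProductSpace.toDual ℝ _ G := by
      rw [hGdef, LinearIsometryEquiv.apply_symm_apply]
    have hw : HasFDerivAt (fun y => v y ^ p) ((p * v x ^ (p - 1)) • fderiv ℝ v x) x :=
      (hdv x).rpow_const (Or.inl hvx.ne')
    have hgw : gradient (fun y => v y ^ p) x = (p * v x ^ (p - 1)) • G := by
      unfold gradient
      rw [hw.fderiv, _root_.map_smul]
    have he := heq x hx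
    rw [hgw, smul_smul] at he
    have hcoe : (v x)⁻¹ * (p * v x ^ (p - 1)) = p * v x ^ (p - 2) := by
      have h1 : v x ^ (p - 2) = v x ^ (p - 1) / v x ^ (1 : ℝ) := by
        rw [← Real.rpow_sub hvx]; congr 1; ring
      rw [h1, Real.rpow_one]
      field_simp
    rw [hcoe] at he
    have h3 : (p * v x ^ (p - 2)) • G = -(K • x) := by
      rw [eq_neg_iff_add_eq_zero]; exact he
    have hG : ((p - 1) * v x ^ (p - 2)) • G = (-(2 * b)) • x := by
      have h2 : ((p - 1) * v x ^ (p - 2)) • G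
          = ((p - 1) / p) • ((p * v x ^ (p - 2)) • G) := by
        rw [smul_smul]; congr 1; field_simp
      rw [h2, h3, smul_neg, smul_smul, ← neg_smul]
      congr 1
      rw [hbdef]
      field_simp
    have h1 : HasFDerivAt (fun y => v y ^ (p - 1))
        (((p - 1) * v x ^ (p - 1 - 1)) • fderiv ℝ v x) x :=
      (hdv x).rpow_const (Or.inl hvx.ne')
    have hexp : p - 1 - 1 = p - 2 := by ring
    rw [hexp] at h1
    have h2 : HasFDerivAt (fun y => b * ‖y‖ ^ 2) (b • (2 • innerSL ℝ x)) x :=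
      ((hasStrictFDerivAt_norm_sq x).hasFDerivAt).const_mul b
    have hsum := h1.add h2
    have hzero : (((p - 1) * v x ^ (p - 2)) • fderiv ℝ v x) + b • (2 • innerSL ℝ x) = 0 := by
      ext y
      have hin := congrArg (fun w => @inner ℝ _ _ w y) hG
      simp only [real_inner_smul_left] at hin
      simp only [ContinuousLinearMap.add_apply, ContinuousLinearMap.smul_apply,
        ContinuousLinearMap.zero_apply, hfd, InnerProductSpace.toDual_apply_apply,
        innerSL_apply_apply, smul_eq_mul]
      rw [hin]
      push_cast
      ring
    rw [hzero] at hsum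
    exact hsum
  -- 0 belongs to every connected component of U
  have hcomp0 : ∀ x, 0 < v x → (0 : EuclideanSpace ℝ (Fin n)) ∈ connectedComponentIn U x := by
    intro x hx
    set W := connectedComponentIn U x with hWdef
    have hxU : x ∈ U := hx
    have hWo : IsOpen W := hUo.connectedComponentIn
    have hWc : IsPreconnected W := isPreconnected_connectedComponentIn
    have hWU : W ⊆ U := connectedComponentIn_subset U x
    have hxW : x ∈ W := mem_connectedComponentIn hxU
    have hval : ∀ z ∈ W, v z ^ (p - 1) = g x - b * ‖z‖ ^ 2 := by
      intro z hz
      have h := aux_const_on_preconnected hUo key hWo hWc hWU hz hxW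
      simp only [hgdef] at h ⊢
      linarith [h]
    have hlim : ∀ z ∈ closure W, Tendsto (fun y => v y ^ (p - 1)) (𝓝[W] z)
        (𝓝 (g x - b * ‖z‖ ^ 2)) := by
      intro z hz
      have hcont : Tendsto (fun y : EuclideanSpace ℝ (Fin n) => g x - b * ‖y‖ ^ 2)
          (𝓝[W] z) (𝓝 (g x - b * ‖z‖ ^ 2)) :=
        ((continuous_const.sub (continuous_const.mul (continuous_norm.pow 2))).tendsto z).mono_left
          nhdsWithin_le_nhds
      exact hcont.congr' (eventually_mem_nhdsWithin.mono fun y hy => (hval y hy).symm)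
    rcases lt_or_gt_of_ne hp1 with hplt | hpgt
    · -- p < 1 : every closure point of W is in U, so W is clopen, hence everything
      have hcl : ∀ z ∈ closure W, z ∈ U := by
        intro z hz
        by_contra hzU
        have hvz : v z = 0 := le_antisymm (not_lt.mp hzU) (hnonneg z)
        haveI : (𝓝[W] z).NeBot := mem_closure_iff_nhdsWithin_neBot.mp hz
        have h1 := hlim z hz
        have hv0 : Tendsto v (𝓝[W] z) (𝓝[>] (0 : ℝ)) := by
          rw [tendsto_nhdsWithin_iff]
          constructor
          · have h := hsmooth.continuous.tendsto z
            rw [hvz] at h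
            exact h.mono_left nhdsWithin_le_nhds
          · exact eventually_mem_nhdsWithin.mono fun y hy => hWU hy
        have hpow : Tendsto (fun t : ℝ => t ^ (1 - p)) (𝓝[>] (0 : ℝ)) (𝓝[>] (0 : ℝ)) := by
          rw [tendsto_nhdsWithin_iff]
          constructor
          · have hc : ContinuousAt (fun t : ℝ => t ^ (1 - p)) 0 :=
              Real.continuousAt_rpow_const 0 (1 - p) (Or.inr (by linarith))
            have h := hc.tendsto
            rw [Real.zero_rpow (by linarith : (1 : ℝ) - p ≠ 0)] at h
            exact h.mono_left nhdsWithin_le_nhds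
          · exact eventually_mem_nhdsWithin.mono fun t ht => Real.rpow_pos_of_pos ht _
        have h2 : Tendsto (fun y => v y ^ (p - 1)) (𝓝[W] z) atTop := by
          apply Filter.Tendsto.congr' _ (tendsto_inv_nhdsGT_zero.comp (hpow.comp hv0))
          filter_upwards [eventually_mem_nhdsWithin] with y hy
          have hvy : 0 < v y := hWU hy
          show (v y ^ (1 - p))⁻¹ = v y ^ (p - 1)
          rw [← Real.rpow_neg hvy.le, show -(1 - p) = p - 1 by ring]
        exact not_tendsto_atTop_of_tendsto_nhds h1 h2
      have huniv : (Set.univ : Set (EuclideanSpace ℝ (Fin n))) ⊆ W :=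
        aux_subset_of_closure hWo
          (convex_univ.isPreconnected)
          (fun z hz _ => aux_mem_component_of_closure hUo hz (hcl z hz))
          ⟨x, Set.mem_univ x, hxW⟩
      exact huniv (Set.mem_univ 0)
    · -- p > 1 : W is an open ball centered at the origin
      have hb0 : 0 < b := by
        rw [hbdef]
        exact mul_pos (div_pos (by linarith) (by linarith)) hK
      have hgx0 : 0 < g x := by
        have hr := Real.rpow_pos_of_pos hx (p - 1)
        have hb2 : 0 ≤ b * ‖x‖ ^ 2 := by positivity
        simp only [hgdef]
        nlinarith
      set r := Real.sqrt (g x / b) with hrdef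
      have hr0 : 0 < r := Real.sqrt_pos.mpr (div_pos hgx0 hb0)
      have hsq : ∀ z : EuclideanSpace ℝ (Fin n),
          z ∈ Metric.ball (0 : EuclideanSpace ℝ (Fin n)) r ↔ b * ‖z‖ ^ 2 < g x := by
        intro z
        rw [Metric.mem_ball, dist_zero_right, hrdef, Real.lt_sqrt (norm_nonneg z),
          lt_div_iff₀ hb0]
        constructor <;> intro h <;> linarith
      have hWB : W ⊆ Metric.ball (0 : EuclideanSpace ℝ (Fin n)) r := by
        intro z hz
        rw [hsq]
        have h1 := hval z hz
        have h2 : 0 < v z ^ (p - 1) := Real.rpow_pos_of_pos (hWU hz) _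
        linarith
      have hclB : ∀ z ∈ closure W, z ∈ Metric.ball (0 : EuclideanSpace ℝ (Fin n)) r → z ∈ W := by
        intro z hz hzB
        haveI : (𝓝[W] z).NeBot := mem_closure_iff_nhdsWithin_neBot.mp hz
        have h1 := hlim z hz
        have h2 : Tendsto (fun y => v y ^ (p - 1)) (𝓝[W] z) (𝓝 (v z ^ (p - 1))) := by
          have hc : ContinuousAt (fun t : ℝ => t ^ (p - 1)) (v z) :=
            Real.continuousAt_rpow_const _ _ (Or.inr (by linarith))
          exact (hc.comp hsmooth.continuous.continuousAt).tendsto.mono_left nhdsWithin_le_nhds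
        have heqz : v z ^ (p - 1) = g x - b * ‖z‖ ^ 2 := tendsto_nhds_unique h2 h1
        rw [hsq] at hzB
        have hpos : 0 < v z ^ (p - 1) := by rw [heqz]; linarith
        have hvz : 0 < v z := by
          rcases (hnonneg z).lt_or_eq with h | h
          · exact h
          · rw [← h, Real.zero_rpow (by linarith : p - 1 ≠ 0)] at hpos
            exact absurd hpos (lt_irrefl 0)
        exact aux_mem_component_of_closure hUo hz hvz
      have hBW : Metric.ball (0 : EuclideanSpace ℝ (Fin n)) r ⊆ W :=
        aux_subset_of_closure hWo (convex_ball _ _).isPreconnected hclB ⟨x, hWB hxW, hxW⟩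
      exact hBW (Metric.mem_ball_self hr0)
  -- conclusion
  refine ⟨g 0, fun x hx => ?_⟩
  have h0 := hcomp0 x hx
  have hgeq : g x = g 0 :=
    aux_const_on_preconnected hUo key hUo.connectedComponentIn
      isPreconnected_connectedComponentIn (connectedComponentIn_subset U x)
      (mem_connectedComponentIn (show x ∈ U from hx)) h0
  have hrw : v x ^ (p - 1) + (p - 1) / (2 * p) * ‖x‖ ^ 2 * K = g x := by
    simp only [hgdef]; ring
  rw [hrw, hgeq]
end
end

section
/- Let n ≥ 1, E₀ > 0, and let h : [0,∞) → ℝ be a differentiable nonnegative function satisfying h'(τ) ≤ −(n²/E₀)(exp{(2/n) h(τ)} − 1) for all τ ≥ 0. Then for all τ ≥ 0, h(τ) ≤ −(n/2) log[ 1 − (1 − exp{−(2/n) h(0)}) exp{−(2n/E₀) τ} ]. -/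
open MeasureTheory Real Filter
open scoped Topology

noncomputable section

/-- **Comparison lemma for the entropy differential inequality.**
Let `n ≥ 1`, `E₀ > 0`, and let `h : [0,∞) → ℝ` be a differentiable nonnegative function
satisfying `h'(τ) ≤ −(n²/E₀)(exp((2/n) h(τ)) − 1)` for all `τ ≥ 0`.  Then for all
`τ ≥ 0`, `h(τ) ≤ −(n/2) log[1 − (1 − exp(−(2/n) h(0))) exp(−(2n/E₀) τ)]`. -/
theorem entropy_differential_inequality_comparison
    (n : ℕ) (hn : 1 ≤ n) (E₀ : ℝ) (hE₀ : 0 < E₀)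
    (h h' : ℝ → ℝ)
    (hderiv : ∀ τ ≥ (0:ℝ), HasDerivWithinAt h (h' τ) (Set.Ici 0) τ)
    (hnonneg : ∀ τ ≥ (0:ℝ), 0 ≤ h τ)
    (hineq : ∀ τ ≥ (0:ℝ),
      h' τ ≤ -((n : ℝ) ^ 2 / E₀) * (Real.exp ((2 / (n : ℝ)) * h τ) - 1)) :
    ∀ τ ≥ (0:ℝ),
      h τ ≤ -((n : ℝ) / 2) *
        Real.log (1 - (1 - Real.exp (-(2 / (n : ℝ)) * h 0)) *
          Real.exp (-(2 * (n : ℝ) / E₀) * τ)) := by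
  intro τ hτ
  have hn0 : (0:ℝ) < n := by exact_mod_cast hn
  set c : ℝ := 2 / (n:ℝ) with hc
  have hcpos : 0 < c := by positivity
  set a : ℝ := 2 * (n:ℝ) / E₀ with ha
  have hapos : 0 < a := by positivity
  set g : ℝ → ℝ := fun t => Real.exp (-c * h t) with hg
  have hgpos : ∀ t, 0 < g t := fun t => Real.exp_pos _
  have hgle : ∀ t ≥ (0:ℝ), g t ≤ 1 := by
    intro t ht
    have : -c * h t ≤ 0 := by nlinarith [hnonneg t ht]
    simpa [hg] using Real.exp_le_one_iff.mpr this
  -- derivative of g within Ici 0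
  have hgderiv : ∀ t ≥ (0:ℝ), HasDerivWithinAt g (g t * (-c * h' t)) (Set.Ici 0) t := by
    intro t ht
    have h1 : HasDerivWithinAt (fun s => -c * h s) (-c * h' t) (Set.Ici 0) t :=
      (hderiv t ht).const_mul (-c)
    simpa [hg] using h1.exp
  -- F is monotone
  set F : ℝ → ℝ := fun t => Real.exp (a * t) * (g t - 1) with hF
  have hFderiv : ∀ t ≥ (0:ℝ), HasDerivWithinAt F
      (a * Real.exp (a * t) * (g t - 1) + Real.exp (a * t) * (g t * (-c * h' t)))
      (Set.Ici 0) t := by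
    intro t ht
    have he : HasDerivWithinAt (fun s => Real.exp (a * s)) (a * Real.exp (a * t))
        (Set.Ici 0) t := by
      have := ((hasDerivAt_id t).const_mul a).exp.hasDerivWithinAt (s := Set.Ici (0:ℝ))
      simpa [mul_comm] using this
    have := he.mul ((hgderiv t ht).sub_const 1)
    exact this
  have hFnonneg : ∀ t ∈ interior (Set.Ici (0:ℝ)), 0 ≤ deriv F t := by
    intro t ht
    rw [interior_Ici] at ht
    have ht0 : (0:ℝ) ≤ t := le_of_lt ht
    have hmem : Set.Ici (0:ℝ) ∈ 𝓝 t := Ici_mem_nhds ht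
    have hd : HasDerivAt F
        (a * Real.exp (a * t) * (g t - 1) + Real.exp (a * t) * (g t * (-c * h' t))) t :=
      (hFderiv t ht0).hasDerivAt hmem
    rw [hd.deriv]
    -- key inequality
    have hgt := hgpos t
    have hexp1 : Real.exp (c * h t) * g t = 1 := by
      rw [hg]
      rw [← Real.exp_add]
      simp [neg_mul]
    have hexp : Real.exp (c * h t) = 1 / g t := by
      field_simp at hexp1 ⊢
      linarith [hexp1]
    have hiq := hineq t ht0
    rw [hexp] at hiq
    -- hiq : h' t ≤ -(n^2/E₀) * (1/g t - 1)
    have key : a * (1 - g t) ≤ g t * (-c * h' t) := by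
      have h2 : g t * (-c * h' t) = -c * (h' t * g t) := by ring
      have h3 : h' t * g t ≤ -((n:ℝ)^2 / E₀) * (1 - g t) := by
        have := mul_le_mul_of_nonneg_right hiq (le_of_lt hgt)
        calc h' t * g t ≤ (-((n:ℝ)^2/E₀) * (1/g t - 1)) * g t := this
          _ = -((n:ℝ)^2/E₀) * (1 - g t) := by field_simp
      have h4 : -c * (h' t * g t) ≥ -c * (-((n:ℝ)^2 / E₀) * (1 - g t)) := by
        apply mul_le_mul_of_nonpos_left h3
        linarith
      have h5 : -c * (-((n:ℝ)^2 / E₀) * (1 - g t)) = a * (1 - g t) := by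
        rw [hc, ha]
        field_simp
      linarith [h4, h5 ▸ h4]
    have hepos : 0 < Real.exp (a * t) := Real.exp_pos _
    nlinarith [key, hepos]
  have hFcont : ContinuousOn F (Set.Ici 0) := fun t ht =>
    ((hFderiv t ht).continuousWithinAt)
  have hFdiff : DifferentiableOn ℝ F (interior (Set.Ici (0:ℝ))) := by
    intro t ht
    rw [interior_Ici] at ht
    have hmem : Set.Ici (0:ℝ) ∈ 𝓝 t := Ici_mem_nhds ht
    exact (((hFderiv t (le_of_lt ht)).hasDerivAt hmem).differentiableAt).differentiableWithinAt
  have hmono : MonotoneOn F (Set.Ici 0) :=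
    monotoneOn_of_deriv_nonneg (convex_Ici 0) hFcont hFdiff hFnonneg
  have hF0 : F 0 ≤ F τ := hmono (Set.self_mem_Ici) hτ hτ
  -- unfold
  have hFτ : F τ = Real.exp (a * τ) * (g τ - 1) := rfl
  have hF0' : F 0 = g 0 - 1 := by simp [hF]
  set R : ℝ := 1 - (1 - g 0) * Real.exp (-a * τ) with hR
  have hexpaτ : 0 < Real.exp (a * τ) := Real.exp_pos _
  have hRle : R ≤ g τ := by
    have : g 0 - 1 ≤ Real.exp (a * τ) * (g τ - 1) := by
      rw [← hF0', ← hFτ]; exact hF0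
    have hexpneg : Real.exp (-a * τ) = 1 / Real.exp (a * τ) := by
      rw [neg_mul, Real.exp_neg]; ring
    rw [hR]
    have hprod : Real.exp (-a * τ) * Real.exp (a * τ) = 1 := by
      rw [← Real.exp_add]; simp
    have h6 : (1 - (1 - g 0) * Real.exp (-a * τ)) * Real.exp (a * τ) ≤ g τ * Real.exp (a * τ) := by
      calc (1 - (1 - g 0) * Real.exp (-a * τ)) * Real.exp (a * τ)
          = Real.exp (a * τ) - (1 - g 0) * (Real.exp (-a * τ) * Real.exp (a * τ)) := by ring
        _ = Real.exp (a * τ) - (1 - g 0) := by rw [hprod]; ring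
        _ ≤ g τ * Real.exp (a * τ) := by nlinarith [this]
    exact le_of_mul_le_mul_right h6 hexpaτ
  have hRpos : 0 < R := by
    have h1 : Real.exp (-a * τ) ≤ 1 := by
      apply Real.exp_le_one_iff.mpr; nlinarith
    have h2 : g 0 ≤ 1 := hgle 0 le_rfl
    have h3 : (1 - g 0) * Real.exp (-a * τ) ≤ (1 - g 0) * 1 := by
      apply mul_le_mul_of_nonneg_left h1; linarith
    have := hgpos 0
    rw [hR]; nlinarith
  have hlog : Real.log R ≤ Real.log (g τ) := Real.log_le_log hRpos hRle
  have hlogg : Real.log (g τ) = -c * h τ := by rw [hg]; exact Real.log_exp _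
  have hgoal : h τ ≤ -((n:ℝ)/2) * Real.log R := by
    have : -((n:ℝ)/2) * Real.log (g τ) = h τ := by
      rw [hlogg, hc]; field_simp
    nlinarith [hlog, this, hn0]
  convert hgoal using 3
end
end

section
/- Let n ≥ 1 and let α > 0, β > 0. Then for all τ ≥ 0, the function r₁(τ) = (n/2) log[ 1 − (1 − e^{−2α/n}) e^{−βτ} ]^{−1} is smaller than or equal to the function r₂(τ) = α e^{−βτ}, i.e. −(n/2) log[ 1 − (1 − e^{−2α/n}) e^{−βτ} ] ≤ α e^{−βτ}. -/
open Real

/-- **Comparison of the two decay rates.**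
Let `n ≥ 1` and `α, β > 0`.  Then for all `τ ≥ 0`,
`r₁(τ) = −(n/2) log[1 − (1 − e^{−2α/n}) e^{−βτ}]` is smaller than or equal to
`r₂(τ) = α e^{−βτ}`. -/
theorem rate_r1_le_rate_r2
    (n : ℕ) (hn : 1 ≤ n) (α β : ℝ) (hα : 0 < α) (hβ : 0 < β) :
    ∀ τ ≥ (0:ℝ),
      -((n : ℝ) / 2) * Real.log (1 - (1 - Real.exp (-(2 * α / (n : ℝ)))) *
          Real.exp (-(β * τ))) ≤
        α * Real.exp (-(β * τ)) := by
  intro τ hτ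
  have hnpos : (0:ℝ) < (n:ℝ) := by exact_mod_cast Nat.lt_of_lt_of_le Nat.zero_lt_one hn
  set c : ℝ := 2 * α / (n:ℝ) with hc
  set s : ℝ := Real.exp (-(β * τ)) with hs
  have hs0 : 0 < s := Real.exp_pos _
  have hs1 : s ≤ 1 := by
    rw [hs]
    have : -(β * τ) ≤ 0 := by nlinarith
    simpa using Real.exp_le_one_iff.mpr this
  -- convexity: exp(-c*s) ≤ (1-s)*exp 0 + s * exp (-c)
  have hconv : Real.exp (s * (-c) + (1 - s) * 0) ≤
      s * Real.exp (-c) + (1 - s) * Real.exp 0 :=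
    convexOn_exp.2 (Set.mem_univ (-c)) (Set.mem_univ 0) (le_of_lt hs0)
      (by linarith) (by ring)
  have hkey : Real.exp (-(c * s)) ≤ 1 - (1 - Real.exp (-c)) * s := by
    have := hconv
    rw [Real.exp_zero] at this
    have h1 : s * (-c) + (1 - s) * 0 = -(c * s) := by ring
    rw [h1] at this
    linarith [this]
  have hxpos : 0 < 1 - (1 - Real.exp (-c)) * s :=
    lt_of_lt_of_le (Real.exp_pos _) hkey
  have hlog : -(c * s) ≤ Real.log (1 - (1 - Real.exp (-c)) * s) :=
    (Real.le_log_iff_exp_le hxpos).mpr hkey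
  have hcs : (n:ℝ) / 2 * (c * s) = α * s := by
    field_simp [hc]
    rw [hc]; field_simp
  nlinarith [hlog, hnpos]
end
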